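/- arXiv:1407.5692 — 7 statements merged into one kernel-verified Lean document; each statement's English description precedes it below -/
import Mathlib

section
/- Let G be a finite p-soluble group, let A be the only minimal normal subgroup of G, suppose A has order a power of p, and suppose that A has no complement in G (G does not split over A). Then every minimal normal subgroup B/A of G/A is a p-group. -/
open Function TensorProduct

/-- `A` is a minimal normal subgroup of `G`. -/
def IsMinimalNormalSubgroup (G : Type) [Group G] (A : Subgroup G) : Prop :=
  A.Normal ∧ A ≠ ⊥ ∧ ∀ N : Subgroup G, N.Normal → N ≤ A → N = ⊥ ∨ N = A

/-- `A/B` is a chief factor of `G`, i.e. `B ≤ A` are normal subgroups of `G` and `A/B` is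
a minimal normal subgroup of `G/B`. -/
def IsChiefFactor (G : Type) [Group G] (A B : Subgroup G) : Prop :=
  A.Normal ∧ B.Normal ∧ B < A ∧
    ∀ N : Subgroup G, N.Normal → B ≤ N → N ≤ A → N = B ∨ N = A

/-- `G` is `p`-soluble: every chief factor is a `p`-group or of order prime to `p`.
(The order of the chief factor `A/B` is the relative index of `B` in `A`.) -/
def IsPSoluble (p : ℕ) (G : Type) [Group G] : Prop :=
  ∀ A B : Subgroup G, IsChiefFactor G A B →
    (∃ n : ℕ, B.relIndex A = p ^ n) ∨ Nat.Coprime (B.relIndex A) p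

/-- A linear map between the underlying modules of two representations is equivariant. -/
def IsEquivariant {k G V W : Type} [CommRing k] [Monoid G]
    [AddCommGroup V] [Module k V] [AddCommGroup W] [Module k W]
    (ρ : Representation k G V) (σ : Representation k G W) (f : V →ₗ[k] W) : Prop :=
  ∀ (g : G) (v : V), f (ρ g v) = σ g (f v)

/-- A representation is irreducible if the module is nonzero and has no nontrivial proper
invariant submodule. -/
def IsIrreducibleRep {k G V : Type} [CommRing k] [Monoid G]
    [AddCommGroup V] [Module k V] (ρ : Representation k G V) : Prop :=
  Nontrivial V ∧
    ∀ S : Submodule k V, (∀ (g : G), ∀ v ∈ S, ρ g v ∈ S) → S = ⊥ ∨ S = ⊤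

/-- A module extension `0 → W → X → V → 0` of representations of `G`
(an extension of `W` by `V`). -/
structure RepExtension {k G W V : Type} [CommRing k] [Monoid G]
    [AddCommGroup W] [Module k W] [AddCommGroup V] [Module k V]
    (ρW : Representation k G W) (ρV : Representation k G V) where
  X : Type
  [instAdd : AddCommGroup X]
  [instMod : Module k X]
  ρX : Representation k G X
  i : W →ₗ[k] X
  π : X →ₗ[k] V
  hi : Function.Injective i
  hπ : Function.Surjective π
  hexact : LinearMap.range i = LinearMap.ker π
  hiEquiv : ∀ (g : G) (w : W), i (ρW g w) = ρX g (i w)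
  hπEquiv : ∀ (g : G) (x : X), π (ρX g x) = ρV g (π x)

attribute [instance] RepExtension.instAdd RepExtension.instMod

/-- An extension splits if the quotient map has an equivariant linear section. -/
def RepExtension.Splits {k G W V : Type} [CommRing k] [Monoid G]
    [AddCommGroup W] [Module k W] [AddCommGroup V] [Module k V]
    {ρW : Representation k G W} {ρV : Representation k G V}
    (E : RepExtension ρW ρV) : Prop :=
  ∃ s : V →ₗ[k] E.X, IsEquivariant ρV E.ρX s ∧ E.π ∘ₗ s = LinearMap.id

/-- Two representations are linked if there is a non-split extension of one by the other. -/
def LinkedRep {k G W V : Type} [CommRing k] [Monoid G]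
    [AddCommGroup W] [Module k W] [AddCommGroup V] [Module k V]
    (ρW : Representation k G W) (ρV : Representation k G V) : Prop :=
  (∃ E : RepExtension ρW ρV, ¬ E.Splits) ∨ (∃ E : RepExtension ρV ρW, ¬ E.Splits)

/-- A bundled representation of `G` over `k`. -/
structure BRep (k G : Type) [CommRing k] [Monoid G] where
  V : Type
  [instAdd : AddCommGroup V]
  [instMod : Module k V]
  ρ : Representation k G V

attribute [instance] BRep.instAdd BRep.instMod

/-- Bundle a representation. -/
def BRep.of {k G : Type} [CommRing k] [Monoid G] {V : Type} [AddCommGroup V] [Module k V]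
    (ρ : Representation k G V) : BRep k G :=
  { V := V, ρ := ρ }

/-- One step in a chain linking two irreducible representations. -/
def BlockRel {k G : Type} [CommRing k] [Monoid G] (M N : BRep k G) : Prop :=
  IsIrreducibleRep M.ρ ∧ IsIrreducibleRep N.ρ ∧ LinkedRep M.ρ N.ρ

/-- Two irreducible representations lie in the same block: they are joined by a chain of
irreducible representations in which consecutive terms are linked. -/
def SameBlock {k G : Type} [CommRing k] [Monoid G] (M N : BRep k G) : Prop :=
  IsIrreducibleRep M.ρ ∧ IsIrreducibleRep N.ρ ∧ Relation.ReflTransGen BlockRel M N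

/-- The (bundled) trivial one-dimensional representation. -/
def trivialBRep (k G : Type) [CommRing k] [Monoid G] : BRep k G :=
  { V := k, ρ := Representation.trivial k G k }

/-- An irreducible representation lies in the principal block if it lies in the same block as
the trivial one-dimensional representation. -/
def InPrincipalBlock {k G : Type} [CommRing k] [Monoid G] (M : BRep k G) : Prop :=
  SameBlock M (trivialBRep k G)

/-- `φ : A → V` realizes the representation `ρ` on `V` as the chief factor module `[A/B]`:
`φ` is a surjective homomorphism from `A` to the additive group of `V`, with kernel `B`,
transforming the conjugation action of `G` into the action via `ρ`. -/
def IsChiefFactorMap (p : ℕ) {G : Type} [Group G] (A B : Subgroup G) {V : Type}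
    [AddCommGroup V] [Module (ZMod p) V] (ρ : Representation (ZMod p) G V) (φ : A → V) : Prop :=
  IsChiefFactor G A B ∧
    (∀ a b : A, φ (a * b) = φ a + φ b) ∧
    Function.Surjective φ ∧
    (∀ a : A, φ a = 0 ↔ (a : G) ∈ B) ∧
    (∀ (g : G) (a a' : A), (a' : G) = g * (a : G) * g⁻¹ → φ a' = ρ g (φ a))

/-- The representation `ρ` is (a realization of) the chief factor module `[A/B]` of `G`. -/
def IsChiefFactorRep (p : ℕ) {G : Type} [Group G] (A B : Subgroup G) {V : Type}
    [AddCommGroup V] [Module (ZMod p) V] (ρ : Representation (ZMod p) G V) : Prop :=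
  ∃ φ : A → V, IsChiefFactorMap p A B ρ φ

/-- `ρV` is (isomorphic to) a composition factor of the representation `ρX`. -/
def IsCompositionFactorOf {k G V X : Type} [CommRing k] [Monoid G]
    [AddCommGroup V] [Module k V] [AddCommGroup X] [Module k X]
    (ρV : Representation k G V) (ρX : Representation k G X) : Prop :=
  IsIrreducibleRep ρV ∧
    ∃ T S : Submodule k X,
      (∀ (g : G), ∀ x ∈ T, ρX g x ∈ T) ∧
      (∀ (g : G), ∀ x ∈ S, ρX g x ∈ S) ∧
      S ≤ T ∧
      ∃ ψ : T →ₗ[k] V, Function.Surjective ψ ∧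
        (∀ t : T, ψ t = 0 ↔ (t : X) ∈ S) ∧
        (∀ (g : G) (t t' : T), (t' : X) = ρX g (t : X) → ψ t' = ρV g (ψ t))

/-- The tensor product of two bundled representations, with the diagonal action. -/
noncomputable def BRep.tensor {k G : Type} [CommRing k] [Monoid G] (M N : BRep k G) :
    BRep k G :=
  BRep.of (M.ρ.tprod N.ρ)

/-- The dual of a bundled representation. -/
def BRep.dual {k G : Type} [CommRing k] [Group G] (M : BRep k G) : BRep k G :=
  BRep.of M.ρ.dual

/-- Equivariant isomorphism of bundled representations. -/
def BRepIso {k G : Type} [CommRing k] [Monoid G] (M N : BRep k G) : Prop :=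
  ∃ e : M.V ≃ₗ[k] N.V, IsEquivariant M.ρ N.ρ (e : M.V →ₗ[k] N.V)

section Aux

open Subgroup MulOpposite Pointwise

lemma my_subgroup_eq_of_le_of_card {G : Type*} [Group G] [Finite G]
    {H K : Subgroup G} (h : H ≤ K) (hc : Nat.card K ≤ Nat.card H) : H = K := by
  apply SetLike.coe_injective
  apply Set.eq_of_subset_of_ncard_le h _ (Set.toFinite _)
  rwa [← Nat.card_coe_set_eq, ← Nat.card_coe_set_eq]

variable {G : Type*} [Group G] [Finite G] (H : Subgroup G) [H.Normal] [IsMulCommutative H]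

lemma my_complement_is_stabilizer
    (hcop : Nat.Coprime (Nat.card H) H.index)
    (K : Subgroup G) (hK : IsComplement' H K) :
    ∃ α : H.QuotientDiff, K = MulAction.stabilizer G α := by
  set T : H.LeftTransversal :=
    ⟨(K : Set G), show IsComplement (K : Set G) (H : Set G) from hK.symm⟩ with hT
  refine ⟨Quotient.mk'' T, ?_⟩
  set α : H.QuotientDiff := Quotient.mk'' T with hα
  have hle : K ≤ MulAction.stabilizer G α := by
    intro k hk
    show k • α = α
    have h1 : k • α = Quotient.mk'' (op k⁻¹ • T) := rfl
    rw [h1, hα]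
    congr 1
    apply Subtype.ext
    show op k⁻¹ • (K : Set G) = (K : Set G)
    ext x
    constructor
    · rintro ⟨y, hy, rfl⟩
      show y * k⁻¹ ∈ K
      exact K.mul_mem hy (K.inv_mem hk)
    · intro hx
      exact ⟨x * k, K.mul_mem hx hk, by show (x * k) * k⁻¹ = x; group⟩
  have hc := Subgroup.isComplement'_stabilizer_of_coprime (α := α) hcop
  have hcard : Nat.card (MulAction.stabilizer G α) ≤ Nat.card K := by
    have h1 := hK.card_mul
    have h2 := hc.card_mul
    have h0 : 0 < Nat.card H := Nat.card_pos
    exact (Nat.eq_of_mul_eq_mul_left h0 (h2.trans h1.symm)).le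
  exact my_subgroup_eq_of_le_of_card hle hcard

lemma my_conj_complement
    (hcop : Nat.Coprime (Nat.card H) H.index)
    (K₁ K₂ : Subgroup G) (h₁ : IsComplement' H K₁) (h₂ : IsComplement' H K₂) :
    ∃ c ∈ H, K₂ = K₁.map (MulAut.conj c).toMonoidHom := by
  obtain ⟨α, hA⟩ := my_complement_is_stabilizer H hcop K₁ h₁
  obtain ⟨β, hB⟩ := my_complement_is_stabilizer H hcop K₂ h₂
  obtain ⟨h, hh⟩ := Subgroup.exists_smul_eq hcop α β
  refine ⟨(h : G), h.2, ?_⟩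
  have h3 : ((h : G)) • α = β := hh
  rw [hB, ← h3, MulAction.stabilizer_smul_eq_stabilizer_map_conj, ← hA]

lemma my_exists_minimal_normal_le {G : Type} [Group G] [Finite G]
    (N : Subgroup G) (hN : N.Normal) (h : N ≠ ⊥) :
    ∃ M : Subgroup G, IsMinimalNormalSubgroup G M ∧ M ≤ N := by
  have hfin : Finite (Subgroup G) :=
    Finite.of_injective (fun H : Subgroup G => (H : Set G)) SetLike.coe_injective
  have hwf : WellFoundedLT (Subgroup G) := Finite.to_wellFoundedLT
  obtain ⟨M, hM, hmin⟩ := hwf.wf.has_min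
    {M : Subgroup G | M.Normal ∧ M ≠ ⊥ ∧ M ≤ N} ⟨N, hN, h, le_rfl⟩
  refine ⟨M, ⟨hM.1, hM.2.1, fun N' hN' hle => ?_⟩, hM.2.2⟩
  by_cases hb : N' = ⊥
  · exact Or.inl hb
  · right
    by_contra hne
    exact hmin N' ⟨hN', hb, hle.trans hM.2.2⟩ (lt_of_le_of_ne hle hne)

lemma my_minimal_pgroup_comm {p : ℕ} (hp : p.Prime) {G : Type} [Group G] [Finite G]
    (A : Subgroup G) (hA : IsMinimalNormalSubgroup G A)
    (hAp : ∃ n : ℕ, Nat.card A = p ^ n) :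
    ∀ x ∈ A, ∀ y ∈ A, x * y = y * x := by
  set Z := Subgroup.centralizer (A : Set G) ⊓ A with hZ
  have hZnormal : Z.Normal := by
    constructor
    intro z hz g
    rw [hZ, Subgroup.mem_inf] at hz ⊢
    obtain ⟨hz1, hz2⟩ := hz
    refine ⟨?_, hA.1.conj_mem z hz2 g⟩
    rw [Subgroup.mem_centralizer_iff]
    intro h hh
    have hh' : g⁻¹ * h * g ∈ A := by
      have := hA.1.conj_mem h hh g⁻¹
      simpa using this
    have hc := Subgroup.mem_centralizer_iff.mp hz1 _ hh'
    calc h * (g * z * g⁻¹) = g * (g⁻¹ * h * g * z) * g⁻¹ := by group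
      _ = g * (z * (g⁻¹ * h * g)) * g⁻¹ := by rw [hc]
      _ = g * z * g⁻¹ * h := by group
  obtain ⟨n, hn⟩ := hAp
  have hnontriv : Nontrivial A := by
    have h1 : Nat.card A ≠ 1 := fun h => hA.2.1 (Subgroup.card_eq_one.mp h)
    have : 1 < Nat.card A := lt_of_le_of_ne Nat.card_pos (Ne.symm h1)
    exact (Finite.one_lt_card_iff_nontrivial).mp this
  have hpA : IsPGroup p A := IsPGroup.of_card hn
  haveI : Fact p.Prime := ⟨hp⟩
  have hcenter : Nontrivial (Subgroup.center A) := IsPGroup.center_nontrivial hpA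
  obtain ⟨z, hzne⟩ := exists_ne (1 : Subgroup.center A)
  have hzZ : ((z : A) : G) ∈ Z := by
    rw [hZ, Subgroup.mem_inf]
    refine ⟨?_, (z : A).2⟩
    rw [Subgroup.mem_centralizer_iff]
    intro h hh
    have := (Subgroup.mem_center_iff.mp z.2) ⟨h, hh⟩
    exact congrArg Subtype.val this
  have hZbot : Z ≠ ⊥ := by
    intro hb
    apply hzne
    have : ((z : A) : G) = 1 := by
      have := hb ▸ hzZ
      simpa [Subgroup.mem_bot] using this
    ext
    simpa using this
  have hZA : Z = A := (hA.2.2 Z hZnormal inf_le_right).resolve_left hZbot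
  intro x hx y hy
  have hxZ : x ∈ Z := hZA ▸ hx
  exact (Subgroup.mem_centralizer_iff.mp hxZ.1 y hy).symm

end Aux

open Subgroup

/-- Barnes, Lemma 2.1 first part. Let `G` be a finite `p`-soluble group whose
only minimal normal subgroup is `A`, of `p`-power order, and suppose `A` has no complement in
`G`. Then every minimal normal subgroup `B/A` of `G/A` is a `p`-group. -/
theorem chief_factor_above_socle_is_pGroup
    (p : ℕ) (hp : p.Prime) (G : Type) [Group G] [Finite G]
    (hGsol : IsPSoluble p G)
    (A : Subgroup G) (hA : IsMinimalNormalSubgroup G A)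
    (huniq : ∀ N : Subgroup G, IsMinimalNormalSubgroup G N → N = A)
    (hAp : ∃ n : ℕ, Nat.card A = p ^ n)
    (hnosplit : ¬ ∃ U : Subgroup G, U ⊓ A = ⊥ ∧ U ⊔ A = ⊤)
    (B : Subgroup G) (hB : IsChiefFactor G B A) :
    ∃ n : ℕ, A.relIndex B = p ^ n := by
  rcases hGsol B A hB with h | hcop
  · exact h
  exfalso
  obtain ⟨n, hcardA⟩ := hAp
  haveI hAnormal : A.Normal := hA.1
  haveI hBnormal : B.Normal := hB.1
  have hAB : A ≤ B := le_of_lt hB.2.2.1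
  set A' : Subgroup B := A.subgroupOf B with hA'def
  haveI hA'norm : A'.Normal := Subgroup.normal_subgroupOf
  have hcardA' : Nat.card A' = p ^ n := by
    rw [← hcardA]
    exact Nat.card_congr (Subgroup.subgroupOfEquivOfLe hAB).toEquiv
  have hindexA' : A'.index = A.relIndex B := rfl
  have hcopA' : Nat.Coprime (Nat.card A') A'.index := by
    rw [hcardA', hindexA']
    exact Nat.Coprime.pow_left n hcop.symm
  have hcomm := my_minimal_pgroup_comm hp A hA ⟨n, hcardA⟩
  haveI hA'comm : IsMulCommutative A' := by
    constructor; constructor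
    intro a b
    have ha := Subgroup.mem_subgroupOf.mp a.2
    have hb := Subgroup.mem_subgroupOf.mp b.2
    have h := hcomm _ ha _ hb
    exact Subtype.ext (Subtype.ext h)
  obtain ⟨K, hK⟩ := Subgroup.exists_right_complement'_of_coprime hcopA'
  set K' : Subgroup G := K.map B.subtype with hK'def
  have hK'B : K' ≤ B := Subgroup.map_subtype_le K
  have hcardK : Nat.card K' = Nat.card K :=
    (Nat.card_congr (Subgroup.equivMapOfInjective K _ B.subtype_injective).toEquiv).symm
  have hdisjG : ∀ x : G, x ∈ A → x ∈ K' → x = 1 := by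
    intro x hxA hxK
    obtain ⟨k, hkK, hky⟩ := Subgroup.mem_map.mp hxK
    have hky' : (k : G) = x := hky
    have hkA' : k ∈ A' := Subgroup.mem_subgroupOf.mpr (by rw [hky']; exact hxA)
    have hk1 : k = 1 := by
      have h0 : k ∈ A' ⊓ K := Subgroup.mem_inf.mpr ⟨hkA', hkK⟩
      rw [disjoint_iff.mp hK.disjoint] at h0
      exact Subgroup.mem_bot.mp h0
    rw [← hky', hk1]
    rfl
  -- Frattini-type argument
  have key : ∀ g : G, ∃ c ∈ A, (c⁻¹ * g) ∈ Subgroup.normalizer (K' : Set G) := by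
    intro g
    have hmapB : K'.map (MulAut.conj g).toMonoidHom ≤ B := by
      intro x hx
      obtain ⟨y, hy, rfl⟩ := Subgroup.mem_map.mp hx
      simpa using hBnormal.conj_mem y (hK'B hy) g
    set Kg : Subgroup B := (K'.map (MulAut.conj g).toMonoidHom).subgroupOf B with hKgdef
    have hcardKg : Nat.card Kg = Nat.card K := by
      rw [Nat.card_congr (Subgroup.subgroupOfEquivOfLe hmapB).toEquiv, ← hcardK]
      exact (Nat.card_congr (Subgroup.equivMapOfInjective K' _
        (MulAut.conj g).injective).toEquiv).symm
    have hdisj : Disjoint A' Kg := by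
      rw [disjoint_iff_inf_le]
      intro x hx
      obtain ⟨hx1, hx2⟩ := Subgroup.mem_inf.mp hx
      have hxA : (x : G) ∈ A := Subgroup.mem_subgroupOf.mp hx1
      obtain ⟨y, hy, hyx⟩ := Subgroup.mem_map.mp (Subgroup.mem_subgroupOf.mp hx2)
      have hyx' : g * y * g⁻¹ = (x : G) := by simpa using hyx
      have hyA : y ∈ A := by
        have h1 : y = g⁻¹ * (x : G) * g := by rw [← hyx']; group
        rw [h1]
        simpa using hAnormal.conj_mem _ hxA g⁻¹
      have hy1 : y = 1 := hdisjG y hyA hy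
      have : (x : G) = 1 := by rw [← hyx', hy1]; group
      rw [Subgroup.mem_bot]
      exact Subtype.ext this
    have hKgcomp : IsComplement' A' Kg :=
      Subgroup.isComplement'_of_card_mul_and_disjoint
        (by rw [hcardKg]; exact hK.card_mul) hdisj
    obtain ⟨c, hcA', hc⟩ := my_conj_complement A' hcopA' K Kg hK hKgcomp
    refine ⟨(c : G), Subgroup.mem_subgroupOf.mp hcA', ?_⟩
    have hmapKg : Kg.map B.subtype = K'.map (MulAut.conj g).toMonoidHom := by
      rw [hKgdef, Subgroup.subgroupOf_map_subtype, inf_eq_left.mpr hmapB]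
    have hcomp : B.subtype.comp (MulAut.conj c).toMonoidHom
        = (MulAut.conj ((c : B) : G)).toMonoidHom.comp B.subtype := by
      ext x
      rfl
    have heq : K'.map (MulAut.conj g).toMonoidHom = K'.map (MulAut.conj ((c : B) : G)).toMonoidHom := by
      rw [← hmapKg, hc, Subgroup.map_map, hcomp, ← Subgroup.map_map, ← hK'def]
    set u : G := ((c : B) : G)⁻¹ * g with hu
    have h4 : (MulAut.conj u).toMonoidHom =
        (MulAut.conj (((c : B) : G))⁻¹).toMonoidHom.comp (MulAut.conj g).toMonoidHom := by
      ext x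
      simp [MulAut.conj_apply, hu, mul_assoc]
    have hmapu : K'.map (MulAut.conj u).toMonoidHom = K' := by
      rw [h4, ← Subgroup.map_map, heq, Subgroup.map_map]
      have h5 : (MulAut.conj (((c : B) : G))⁻¹).toMonoidHom.comp
          (MulAut.conj (((c : B) : G))).toMonoidHom = MonoidHom.id G := by
        ext x
        simp [MulAut.conj_apply, mul_assoc]
      rw [h5, Subgroup.map_id]
    rw [Subgroup.mem_normalizer_iff]
    intro x
    constructor
    · intro hx
      rw [← hmapu]
      exact Subgroup.mem_map.mpr ⟨x, hx, by simp [MulAut.conj_apply]⟩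
    · intro hx
      rw [← hmapu] at hx
      obtain ⟨y, hy, hyx⟩ := Subgroup.mem_map.mp hx
      have h6 : u * y * u⁻¹ = u * x * u⁻¹ := by simpa [MulAut.conj_apply] using hyx
      have h7 : y = x := mul_left_cancel (mul_right_cancel h6)
      rwa [← h7]
  -- use the Frattini argument
  set N := Subgroup.normalizer (K' : Set G) with hNdef
  have hsup : A ⊔ N = ⊤ := by
    rw [eq_top_iff]
    intro g _
    obtain ⟨c, hcA, hn⟩ := key g
    have hg : g = c * (c⁻¹ * g) := by group
    rw [hg]
    exact Subgroup.mul_mem_sup hcA hn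
  have hDnormal : (N ⊓ A).Normal := by
    rw [← Subgroup.normalizer_eq_top_iff, eq_top_iff, ← hsup, sup_le_iff]
    constructor
    · intro c hc
      rw [Subgroup.mem_normalizer_iff]
      intro x
      constructor
      · intro hx
        have hx2 := (Subgroup.mem_inf.mp hx).2
        have h8 : c * x * c⁻¹ = x := by rw [hcomm c hc x hx2]; group
        rwa [h8]
      · intro hx
        have hx2 := (Subgroup.mem_inf.mp hx).2
        have hxA : x ∈ A := by
          have h7 : x = c⁻¹ * (c * x * c⁻¹) * c := by group
          rw [h7]
          exact A.mul_mem (A.mul_mem (A.inv_mem hc) hx2) hc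
        have h8 : c * x * c⁻¹ = x := by rw [hcomm c hc x hxA]; group
        rwa [h8] at hx
    · intro m hm
      rw [Subgroup.mem_normalizer_iff]
      intro x
      constructor
      · intro hx
        obtain ⟨hx1, hx2⟩ := Subgroup.mem_inf.mp hx
        exact Subgroup.mem_inf.mpr
          ⟨N.mul_mem (N.mul_mem hm hx1) (N.inv_mem hm), hAnormal.conj_mem x hx2 m⟩
      · intro hx
        obtain ⟨hx1, hx2⟩ := Subgroup.mem_inf.mp hx
        refine Subgroup.mem_inf.mpr ⟨?_, ?_⟩
        · have h9 : x = m⁻¹ * (m * x * m⁻¹) * m := by group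
          rw [h9]
          exact N.mul_mem (N.mul_mem (N.inv_mem hm) hx1) hm
        · have h9 := hAnormal.conj_mem _ hx2 m⁻¹
          simpa [mul_assoc] using h9
  rcases hA.2.2 (N ⊓ A) hDnormal inf_le_right with hDbot | hDA
  · exact hnosplit ⟨N, hDbot, by rw [sup_comm]; exact hsup⟩
  · have hAN : A ≤ N := by
      conv_lhs => rw [← hDA]
      exact inf_le_left
    have hNtop : N = ⊤ := by
      rw [eq_top_iff, ← hsup]
      exact sup_le hAN le_rfl
    haveI hK'normal : K'.Normal := Subgroup.normalizer_eq_top_iff.mp hNtop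
    have hK'ne : K' ≠ ⊥ := by
      intro hb
      have h1 : Nat.card K = 1 := by rw [← hcardK]; exact Subgroup.card_eq_one.mpr hb
      have h2 : A.relIndex B = 1 := by
        rw [← hindexA', hK.symm.index_eq_card, h1]
      exact hB.2.2.1.not_ge (Subgroup.relIndex_eq_one.mp h2)
    obtain ⟨M, hM, hMK⟩ := my_exists_minimal_normal_le K' hK'normal hK'ne
    have hAK' : A ≤ K' := (huniq M hM) ▸ hMK
    have hex : ∃ a : G, a ∈ A ∧ a ≠ 1 := by
      by_contra hcontra
      push_neg at hcontra
      apply hA.2.1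
      rw [eq_bot_iff]
      intro x hx
      rw [Subgroup.mem_bot]
      exact hcontra x hx
    obtain ⟨a, haA, hane⟩ := hex
    exact hane (hdisjG a haA (hAK' haA))
end

section
/- Let G be a finite p-soluble group, let A be the only minimal normal subgroup of G, suppose A has order a power of p, and suppose that A has no complement in G. Let B/A be a minimal normal subgroup of G/A and suppose B is not abelian. Then the F_p G-module [A] is a quotient of the F_p G-module [B/A] ⊗ [B/A]. -/
open Function TensorProduct

open scoped commutatorElement

private lemma cardLtAux {G : Type} [Group G] [Finite G] {N K : Subgroup G} (h : N < K) :
    Nat.card N < Nat.card K := by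
  have h' : (N : Set G) ⊂ (K : Set G) := by exact_mod_cast h
  have := Set.ncard_strictMono h'
  rwa [← Nat.card_coe_set_eq, ← Nat.card_coe_set_eq] at this

private lemma existsMinNormalLe {G : Type} [Group G] [Finite G] :
    ∀ (n : ℕ) (N : Subgroup G), Nat.card N ≤ n → N.Normal → N ≠ ⊥ →
      ∃ M : Subgroup G, IsMinimalNormalSubgroup G M ∧ M ≤ N := by
  intro n
  induction n with
  | zero =>
    intro N hc _ _
    have : 0 < Nat.card N := Nat.card_pos
    omega
  | succ n ih =>
    intro N hc hN hNbot
    by_cases hmin : ∀ K : Subgroup G, K.Normal → K ≤ N → K = ⊥ ∨ K = N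
    · exact ⟨N, ⟨hN, hNbot, hmin⟩, le_rfl⟩
    · push_neg at hmin
      obtain ⟨K, hKn, hKle, hK⟩ := hmin
      have hlt : K < N := lt_of_le_of_ne hKle hK.2
      have hcard := cardLtAux hlt
      obtain ⟨M, hM, hMle⟩ := ih K (by omega) hKn hK.1
      exact ⟨M, hM, hMle.trans hKle⟩

/-- Barnes, Lemma 2.1(1). Let `G` be a finite `p`-soluble group whose only
minimal normal subgroup is `A`, of `p`-power order, with no complement in `G`. Let `B/A` be a
minimal normal subgroup of `G/A` with `B` non-abelian. Then the `𝔽_p G`-module `[A]` is a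
quotient of `[B/A] ⊗ [B/A]`. -/
theorem socle_is_quotient_of_tensor_square
    (p : ℕ) (hp : p.Prime) (G : Type) [Group G] [Finite G]
    (hGsol : IsPSoluble p G)
    (A : Subgroup G) (hA : IsMinimalNormalSubgroup G A)
    (huniq : ∀ N : Subgroup G, IsMinimalNormalSubgroup G N → N = A)
    (hAp : ∃ n : ℕ, Nat.card A = p ^ n)
    (hnosplit : ¬ ∃ U : Subgroup G, U ⊓ A = ⊥ ∧ U ⊔ A = ⊤)
    (B : Subgroup G) (hB : IsChiefFactor G B A)
    (hBnonab : ¬ ∀ x y : B, x * y = y * x)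
    (VA : Type) [AddCommGroup VA] [Module (ZMod p) VA]
    (ρA : Representation (ZMod p) G VA) (φA : A → VA)
    (hφA : IsChiefFactorMap p A ⊥ ρA φA)
    (VBA : Type) [AddCommGroup VBA] [Module (ZMod p) VBA]
    (ρBA : Representation (ZMod p) G VBA) (φBA : B → VBA)
    (hφBA : IsChiefFactorMap p B A ρBA φBA) :
    ∃ f : VBA ⊗[ZMod p] VBA →ₗ[ZMod p] VA,
      Function.Surjective f ∧ IsEquivariant (ρBA.tprod ρBA) ρA f := by
  classical
  have hfp : Fact p.Prime := ⟨hp⟩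
  obtain ⟨hcfA, φAadd, φAsurj, φAker, φAequiv⟩ := hφA
  obtain ⟨hcfB, φBadd, φBsurj, φBker, φBequiv⟩ := hφBA
  have hAnorm : A.Normal := hA.1
  have hBnorm : B.Normal := hB.1
  -- basic additive facts about φA, φBA
  have φB1 : φBA 1 = 0 := by
    have h := φBadd 1 1
    rw [mul_one] at h
    exact (left_eq_add.mp h)
  have φBinv : ∀ b : B, φBA b⁻¹ = - φBA b := by
    intro b
    have h := φBadd b⁻¹ b
    rw [inv_mul_cancel, φB1] at h
    exact eq_neg_of_add_eq_zero_left h.symm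
  have φA1 : φA 1 = 0 := by
    have h := φAadd 1 1
    rw [mul_one] at h
    exact (left_eq_add.mp h)
  have φAinv : ∀ a : A, φA a⁻¹ = - φA a := by
    intro a
    have h := φAadd a⁻¹ a
    rw [inv_mul_cancel, φA1] at h
    exact eq_neg_of_add_eq_zero_left h.symm
  -- commutators of B lie in A
  have commMemA : ∀ b b' : B, ⁅(b : G), (b' : G)⁆ ∈ A := by
    intro b b'
    have h0 : φBA (b * b' * b⁻¹ * b'⁻¹) = 0 := by
      rw [φBadd, φBadd, φBadd, φBinv, φBinv]
      abel
    have h2 := (φBker _).mp h0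
    simpa [commutatorElement_def] using h2
  -- B is a p-group
  obtain ⟨n, hAcard⟩ := hAp
  have φBpow : ∀ (b : B) (k : ℕ), φBA (b ^ k) = k • φBA b := by
    intro b k
    induction k with
    | zero => simpa using φB1
    | succ k ihk => rw [pow_succ, φBadd, ihk, succ_nsmul]
  have hBpg : IsPGroup p B := by
    intro b
    refine ⟨n + 1, ?_⟩
    have h1 : φBA (b ^ p) = 0 := by
      rw [φBpow, ← Nat.cast_smul_eq_nsmul (ZMod p), ZMod.natCast_self, zero_smul]
    have h2 : ((b : G) ^ p) ∈ A := by
      have := (φBker _).mp h1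
      simpa using this
    have h3 : (⟨(b : G) ^ p, h2⟩ : A) ^ (p ^ n) = 1 := by
      rw [← hAcard]; exact pow_card_eq_one'
    have h4 : ((b : G) ^ p) ^ (p ^ n) = 1 := by
      have := congrArg (Subtype.val) h3
      simpa using this
    apply Subtype.ext
    have hexp : p ^ (n + 1) = p * p ^ n := pow_succ' p n
    push_cast
    rw [hexp, pow_mul]
    exact h4
  -- B is nontrivial, so has nontrivial center
  have hBnt : Nontrivial B := by
    by_contra h
    rw [not_nontrivial_iff_subsingleton] at h
    exact hBnonab fun x y => Subsingleton.elim _ _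
  have hZcnt : Nontrivial (Subgroup.center B) := hBpg.center_nontrivial
  obtain ⟨z, hz1⟩ := exists_ne (1 : Subgroup.center B)
  -- the centralizer-intersection subgroup
  have hZnorm : (B ⊓ Subgroup.centralizer (B : Set G)).Normal := by
    constructor
    intro x hx g
    rw [Subgroup.mem_inf] at hx
    obtain ⟨hxB, hxc⟩ := hx
    rw [Subgroup.mem_inf]
    refine ⟨hBnorm.conj_mem x hxB g, ?_⟩
    rw [Subgroup.mem_centralizer_iff]
    intro h hh
    have hh' : g⁻¹ * h * g ∈ B := by
      have := hBnorm.conj_mem h hh g⁻¹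
      simpa using this
    have e : (g⁻¹ * h * g) * x = x * (g⁻¹ * h * g) :=
      Subgroup.mem_centralizer_iff.mp hxc _ hh'
    calc h * (g * x * g⁻¹) = g * ((g⁻¹ * h * g) * x) * g⁻¹ := by group
      _ = g * (x * (g⁻¹ * h * g)) * g⁻¹ := by rw [e]
      _ = (g * x * g⁻¹) * h := by group
  have hzG : ((z : B) : G) ∈ B ⊓ Subgroup.centralizer (B : Set G) := by
    rw [Subgroup.mem_inf]
    refine ⟨(z : B).2, ?_⟩
    rw [Subgroup.mem_centralizer_iff]
    intro h hh
    have := (Subgroup.mem_center_iff.mp z.2) ⟨h, hh⟩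
    exact congrArg Subtype.val this
  have hZbot : (B ⊓ Subgroup.centralizer (B : Set G)) ≠ ⊥ := by
    intro h
    rw [h, Subgroup.mem_bot] at hzG
    exact hz1 (Subtype.ext (Subtype.ext hzG))
  have hAleZ : A ≤ B ⊓ Subgroup.centralizer (B : Set G) := by
    obtain ⟨M, hM, hMle⟩ := existsMinNormalLe
      (Nat.card (B ⊓ Subgroup.centralizer (B : Set G) : Subgroup G)) _ le_rfl hZnorm hZbot
    exact (huniq M hM) ▸ hMle
  have hcent : ∀ a : G, a ∈ A → ∀ b : G, b ∈ B → a * b = b * a := by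
    intro a ha b hb
    exact (Subgroup.mem_centralizer_iff.mp (Subgroup.mem_inf.mp (hAleZ ha)).2 b hb).symm
  -- the commutator subgroup of B equals A
  have hKle : ⁅B, B⁆ ≤ A := by
    rw [Subgroup.commutator_le]
    intro g₁ h₁ g₂ h₂
    exact commMemA ⟨g₁, h₁⟩ ⟨g₂, h₂⟩
  have hKbot : ⁅B, B⁆ ≠ ⊥ := by
    intro hbot
    apply hBnonab
    intro x y
    have hmem : ⁅(x : G), (y : G)⁆ ∈ ⁅B, B⁆ := Subgroup.commutator_mem_commutator x.2 y.2
    rw [hbot, Subgroup.mem_bot, commutatorElement_eq_one_iff_mul_comm] at hmem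
    exact Subtype.ext (by exact_mod_cast hmem)
  have hKA : ⁅B, B⁆ = A := by
    haveI := hBnorm
    rcases hA.2.2 ⁅B, B⁆ (Subgroup.commutator_normal B B) hKle with h | h
    · exact absurd h hKbot
    · exact h
  -- sections and the commutator pairing
  have hsB : ∀ v, φBA (Function.surjInv φBsurj v) = v := fun v => Function.surjInv_eq φBsurj v
  set sB : VBA → B := Function.surjInv φBsurj with hsBdef
  have memAofzero : ∀ b : B, φBA b = 0 → (b : G) ∈ A := fun b h => (φBker b).mp h
  have step1 : ∀ b₁ b₂ b₁' : B, φBA b₁ = φBA b₁' →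
      ⁅(b₁ : G), (b₂ : G)⁆ = ⁅(b₁' : G), (b₂ : G)⁆ := by
    intro b₁ b₂ b₁' hφ
    have haA : ((b₁⁻¹ * b₁' : B) : G) ∈ A := by
      apply memAofzero
      rw [φBadd, φBinv, hφ]
      abel
    have haA' : (b₁ : G)⁻¹ * (b₁' : G) ∈ A := by simpa using haA
    have hb1' : (b₁' : G) = (b₁ : G) * ((b₁ : G)⁻¹ * (b₁' : G)) := by group
    have hc : ((b₁ : G)⁻¹ * (b₁' : G)) * (b₂ : G) = (b₂ : G) * ((b₁ : G)⁻¹ * (b₁' : G)) :=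
      hcent _ haA' _ b₂.2
    rw [hb1']
    set a : G := (b₁ : G)⁻¹ * (b₁' : G)
    symm
    calc ⁅(b₁ : G) * a, (b₂ : G)⁆
        = (b₁ : G) * (a * (b₂ : G)) * a⁻¹ * (b₁ : G)⁻¹ * (b₂ : G)⁻¹ := by
          simp only [commutatorElement_def]; group
      _ = (b₁ : G) * ((b₂ : G) * a) * a⁻¹ * (b₁ : G)⁻¹ * (b₂ : G)⁻¹ := by rw [hc]
      _ = ⁅(b₁ : G), (b₂ : G)⁆ := by simp only [commutatorElement_def]; group
  have step2 : ∀ b₁ b₂ b₂' : B, φBA b₂ = φBA b₂' →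
      ⁅(b₁ : G), (b₂ : G)⁆ = ⁅(b₁ : G), (b₂' : G)⁆ := by
    intro b₁ b₂ b₂' hφ
    have haA : ((b₂⁻¹ * b₂' : B) : G) ∈ A := by
      apply memAofzero
      rw [φBadd, φBinv, hφ]
      abel
    have haA' : (b₂ : G)⁻¹ * (b₂' : G) ∈ A := by simpa using haA
    have hb2' : (b₂' : G) = (b₂ : G) * ((b₂ : G)⁻¹ * (b₂' : G)) := by group
    have hcomm : Commute ((b₂ : G)⁻¹ * (b₂' : G)) (b₁ : G) := hcent _ haA' _ b₁.2
    have hcx : ((b₂ : G)⁻¹ * (b₂' : G)) * (b₁ : G)⁻¹ = (b₁ : G)⁻¹ * ((b₂ : G)⁻¹ * (b₂' : G)) :=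
      hcomm.inv_right.eq
    rw [hb2']
    set a : G := (b₂ : G)⁻¹ * (b₂' : G)
    symm
    calc ⁅(b₁ : G), (b₂ : G) * a⁆
        = (b₁ : G) * (b₂ : G) * (a * (b₁ : G)⁻¹) * (a⁻¹ * (b₂ : G)⁻¹) := by
          simp only [commutatorElement_def]; group
      _ = (b₁ : G) * (b₂ : G) * ((b₁ : G)⁻¹ * a) * (a⁻¹ * (b₂ : G)⁻¹) := by rw [hcx]
      _ = ⁅(b₁ : G), (b₂ : G)⁆ := by simp only [commutatorElement_def]; group
  have memc : ∀ v w : VBA, ⁅(sB v : G), (sB w : G)⁆ ∈ A := fun v w => commMemA _ _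
  obtain ⟨c, hc⟩ : ∃ c : VBA → VBA → VA,
      ∀ v w, c v w = φA ⟨⁅(sB v : G), (sB w : G)⁆, memc v w⟩ := ⟨_, fun _ _ => rfl⟩
  have keyL : ∀ (b b' : B) (h : ⁅(b : G), (b' : G)⁆ ∈ A),
      c (φBA b) (φBA b') = φA ⟨⁅(b : G), (b' : G)⁆, h⟩ := by
    intro b b' h
    rw [hc]
    have e1 := step1 (sB (φBA b)) (sB (φBA b')) b (by rw [hsB])
    have e2 := step2 b (sB (φBA b')) b' (by rw [hsB])
    exact congrArg φA (Subtype.ext (e1.trans e2))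
  -- group-theoretic bilinearity
  have commMul1 : ∀ x y z : G, x ∈ B → y ∈ B → z ∈ B → ⁅x * y, z⁆ = ⁅y, z⁆ * ⁅x, z⁆ := by
    intro x y z hx hy hz
    have hk : ⁅y, z⁆ * x = x * ⁅y, z⁆ := hcent _ (commMemA ⟨y, hy⟩ ⟨z, hz⟩) x hx
    calc ⁅x * y, z⁆ = x * ⁅y, z⁆ * (z * x⁻¹ * z⁻¹) := by
          simp only [commutatorElement_def]; group
      _ = ⁅y, z⁆ * x * (z * x⁻¹ * z⁻¹) := by rw [← hk]
      _ = ⁅y, z⁆ * ⁅x, z⁆ := by simp only [commutatorElement_def]; group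
  have commMul2 : ∀ x y z : G, x ∈ B → y ∈ B → z ∈ B → ⁅x, y * z⁆ = ⁅x, y⁆ * ⁅x, z⁆ := by
    intro x y z hx hy hz
    have hk : ⁅x, z⁆ * y = y * ⁅x, z⁆ := hcent _ (commMemA ⟨x, hx⟩ ⟨z, hz⟩) y hy
    calc ⁅x, y * z⁆ = ⁅x, y⁆ * (y * ⁅x, z⁆ * y⁻¹) := by
          simp only [commutatorElement_def]; group
      _ = ⁅x, y⁆ * (⁅x, z⁆ * y * y⁻¹) := by rw [← hk]
      _ = ⁅x, y⁆ * ⁅x, z⁆ := by group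
  have cadd1 : ∀ u v w : VBA, c (u + v) w = c u w + c v w := by
    intro u v w
    have h1 : φBA (sB u * sB v) = u + v := by rw [φBadd, hsB, hsB]
    have h2 := keyL (sB u * sB v) (sB w) (commMemA _ _)
    rw [h1, hsB] at h2
    have e2 : (⟨⁅((sB u * sB v : B) : G), (sB w : G)⁆, commMemA _ _⟩ : A)
        = ⟨⁅(sB v : G), (sB w : G)⁆, memc v w⟩ * ⟨⁅(sB u : G), (sB w : G)⁆, memc u w⟩ := by
      apply Subtype.ext
      push_cast
      exact commMul1 _ _ _ (sB u).2 (sB v).2 (sB w).2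
    rw [h2, e2, φAadd, ← hc, ← hc, add_comm]
  have cadd2 : ∀ u v w : VBA, c u (v + w) = c u v + c u w := by
    intro u v w
    have h1 : φBA (sB v * sB w) = v + w := by rw [φBadd, hsB, hsB]
    have h2 := keyL (sB u) (sB v * sB w) (commMemA _ _)
    rw [h1, hsB] at h2
    have e2 : (⟨⁅(sB u : G), ((sB v * sB w : B) : G)⁆, commMemA _ _⟩ : A)
        = ⟨⁅(sB u : G), (sB v : G)⁆, memc u v⟩ * ⟨⁅(sB u : G), (sB w : G)⁆, memc u w⟩ := by
      apply Subtype.ext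
      push_cast
      exact commMul2 _ _ _ (sB u).2 (sB v).2 (sB w).2
    rw [h2, e2, φAadd, ← hc, ← hc]
  -- build the linear map
  let inner : VBA → (VBA →ₗ[ZMod p] VA) :=
    fun v => (AddMonoidHom.mk' (c v) (cadd2 v)).toZModLinearMap p
  let NN : VBA →+ (VBA →ₗ[ZMod p] VA) := AddMonoidHom.mk' inner (by
    intro u v
    ext w
    exact cadd1 u v w)
  let bil : VBA →ₗ[ZMod p] (VBA →ₗ[ZMod p] VA) := NN.toZModLinearMap p
  have hft : ∀ v w, TensorProduct.lift bil (v ⊗ₜ[ZMod p] w) = c v w := by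
    intro v w
    rw [TensorProduct.lift.tmul]
    rfl
  refine ⟨TensorProduct.lift bil, ?_, ?_⟩
  · -- surjectivity
    intro x
    obtain ⟨a, rfl⟩ := φAsurj x
    have haK : (a : G) ∈ ⁅B, B⁆ := by rw [hKA]; exact a.2
    rw [Subgroup.commutator_def] at haK
    have main : ∀ hyA : (a : G) ∈ A, ∃ t, TensorProduct.lift bil t = φA ⟨(a : G), hyA⟩ := by
      refine Subgroup.closure_induction
        (p := fun y _ => ∀ hyA : y ∈ A, ∃ t, TensorProduct.lift bil t = φA ⟨y, hyA⟩)
        ?_ ?_ ?_ ?_ haK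
      · rintro x ⟨g₁, hg₁, g₂, hg₂, rfl⟩ hxA
        refine ⟨φBA ⟨g₁, hg₁⟩ ⊗ₜ[ZMod p] φBA ⟨g₂, hg₂⟩, ?_⟩
        rw [hft]
        exact keyL ⟨g₁, hg₁⟩ ⟨g₂, hg₂⟩ hxA
      · intro h1A
        refine ⟨0, ?_⟩
        rw [map_zero]
        have : (⟨(1 : G), h1A⟩ : A) = 1 := Subtype.ext rfl
        rw [this, φA1]
      · intro x y hx hy ihx ihy hxyA
        have hxA : x ∈ A := hKle (by rw [Subgroup.commutator_def]; exact hx)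
        have hyA : y ∈ A := hKle (by rw [Subgroup.commutator_def]; exact hy)
        obtain ⟨t1, ht1⟩ := ihx hxA
        obtain ⟨t2, ht2⟩ := ihy hyA
        refine ⟨t1 + t2, ?_⟩
        rw [map_add, ht1, ht2, ← φAadd]
        rfl
      · intro x hx ihx hxinvA
        have hxA : x ∈ A := hKle (by rw [Subgroup.commutator_def]; exact hx)
        obtain ⟨t, ht⟩ := ihx hxA
        refine ⟨-t, ?_⟩
        rw [map_neg, ht, ← φAinv]
        rfl
    obtain ⟨t, ht⟩ := main a.2
    exact ⟨t, ht⟩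
  · -- equivariance
    intro g t
    induction t using TensorProduct.induction_on with
    | zero => simp
    | tmul v w =>
      have hbB : g * (sB v : G) * g⁻¹ ∈ B := hBnorm.conj_mem _ (sB v).2 g
      have hb'B : g * (sB w : G) * g⁻¹ ∈ B := hBnorm.conj_mem _ (sB w).2 g
      have h1 : φBA ⟨g * (sB v : G) * g⁻¹, hbB⟩ = (ρBA g) v := by
        have := φBequiv g (sB v) ⟨g * (sB v : G) * g⁻¹, hbB⟩ rfl
        rwa [hsB] at this
      have h2 : φBA ⟨g * (sB w : G) * g⁻¹, hb'B⟩ = (ρBA g) w := by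
        have := φBequiv g (sB w) ⟨g * (sB w : G) * g⁻¹, hb'B⟩ rfl
        rwa [hsB] at this
      have hmemA : ⁅g * (sB v : G) * g⁻¹, g * (sB w : G) * g⁻¹⁆ ∈ A :=
        commMemA ⟨_, hbB⟩ ⟨_, hb'B⟩
      have h3 : TensorProduct.lift bil ((ρBA g v) ⊗ₜ[ZMod p] (ρBA g w))
          = φA ⟨⁅g * (sB v : G) * g⁻¹, g * (sB w : G) * g⁻¹⁆, hmemA⟩ := by
        rw [hft, ← h1, ← h2]
        exact keyL _ _ _
      have hconj : ⁅g * (sB v : G) * g⁻¹, g * (sB w : G) * g⁻¹⁆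
          = g * ⁅(sB v : G), (sB w : G)⁆ * g⁻¹ := by
        simp only [commutatorElement_def]; group
      have hmemA2 : g * ⁅(sB v : G), (sB w : G)⁆ * g⁻¹ ∈ A := hconj ▸ hmemA
      have h4 : φA ⟨g * ⁅(sB v : G), (sB w : G)⁆ * g⁻¹, hmemA2⟩
          = ρA g (φA ⟨⁅(sB v : G), (sB w : G)⁆, memc v w⟩) :=
        φAequiv g _ _ rfl
      have h5 : TensorProduct.lift bil (v ⊗ₜ[ZMod p] w)
          = φA ⟨⁅(sB v : G), (sB w : G)⁆, memc v w⟩ := by rw [hft, hc]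
      rw [Representation.tprod_apply, TensorProduct.map_tmul, h3, h5, ← h4]
      exact congrArg φA (Subtype.ext hconj)
    | add x y ihx ihy =>
      simp only [map_add, ihx, ihy]
end

section
/- Let G be a finite p-soluble group, let A be the only minimal normal subgroup of G, suppose A has order a power of p, and suppose that A has no complement in G. Let B/A be a minimal normal subgroup of G/A and suppose B is abelian but not of exponent p. Then the F_p G-modules [A] and [B/A] are isomorphic, an isomorphism being induced by b ↦ b^p. -/
open Function TensorProduct

/-- Barnes, Lemma 2.1(2). Let `G` be a finite `p`-soluble group whose only
minimal normal subgroup is `A`, of `p`-power order, with no complement in `G`. Let `B/A` be a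
minimal normal subgroup of `G/A` with `B` abelian but not of exponent `p`. Then the
`𝔽_p G`-modules `[A]` and `[B/A]` are isomorphic, an isomorphism being induced by `b ↦ b ^ p`. -/
theorem socle_isomorphic_to_chief_factor_above
    (p : ℕ) (hp : p.Prime) (G : Type) [Group G] [Finite G]
    (hGsol : IsPSoluble p G)
    (A : Subgroup G) (hA : IsMinimalNormalSubgroup G A)
    (huniq : ∀ N : Subgroup G, IsMinimalNormalSubgroup G N → N = A)
    (hAp : ∃ n : ℕ, Nat.card A = p ^ n)
    (hnosplit : ¬ ∃ U : Subgroup G, U ⊓ A = ⊥ ∧ U ⊔ A = ⊤)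
    (B : Subgroup G) (hB : IsChiefFactor G B A)
    (hBab : ∀ x y : B, x * y = y * x)
    (hBexp : ¬ ∀ x : B, x ^ p = 1)
    (VA : Type) [AddCommGroup VA] [Module (ZMod p) VA]
    (ρA : Representation (ZMod p) G VA) (φA : A → VA)
    (hφA : IsChiefFactorMap p A ⊥ ρA φA)
    (VBA : Type) [AddCommGroup VBA] [Module (ZMod p) VBA]
    (ρBA : Representation (ZMod p) G VBA) (φBA : B → VBA)
    (hφBA : IsChiefFactorMap p B A ρBA φBA) :
    ∃ e : VBA ≃ₗ[ZMod p] VA,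
      IsEquivariant ρBA ρA (e : VBA →ₗ[ZMod p] VA) ∧
      ∀ b : B, ∃ h : ((b : G) ^ p) ∈ A, e (φBA b) = φA ⟨(b : G) ^ p, h⟩ := by
  
  classical
  obtain ⟨hcfA, addA, surjA, kerA, eqvA⟩ := hφA
  obtain ⟨hcfB, addB, surjB, kerB, eqvB⟩ := hφBA
  have hBnorm : B.Normal := hB.1
  have hAnorm : A.Normal := hB.2.1
  have hAB : A ≤ B := le_of_lt hB.2.2.1
  -- commuting in G of elements of B
  have commG : ∀ x y : G, x ∈ B → y ∈ B → Commute x y := by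
    intro x y hx hy
    have := hBab ⟨x, hx⟩ ⟨y, hy⟩
    exact congrArg (Subtype.val) this
  -- p • v = 0 in ZMod p modules
  have psmulA : ∀ v : VA, p • v = 0 := by
    intro v
    rw [← Nat.cast_smul_eq_nsmul (ZMod p), ZMod.natCast_self, zero_smul]
  have psmulB : ∀ v : VBA, p • v = 0 := by
    intro v
    rw [← Nat.cast_smul_eq_nsmul (ZMod p), ZMod.natCast_self, zero_smul]
  -- basic additivity facts
  have zeroA : φA 1 = 0 := by
    have h := addA 1 1
    rw [mul_one] at h
    exact (left_eq_add.mp h)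
  have zeroB : φBA 1 = 0 := by
    have h := addB 1 1
    rw [mul_one] at h
    exact (left_eq_add.mp h)
  have invB : ∀ b : B, φBA b⁻¹ = - φBA b := by
    intro b
    have h := addB b b⁻¹
    rw [mul_inv_cancel, zeroB] at h
    exact eq_neg_of_add_eq_zero_right h.symm
  have powA : ∀ (a : A) (n : ℕ), φA (a ^ n) = n • φA a := by
    intro a n
    induction n with
    | zero => simpa using zeroA
    | succ n ih => rw [pow_succ, addA, ih, succ_nsmul]
  have powB : ∀ (b : B) (n : ℕ), φBA (b ^ n) = n • φBA b := by
    intro b n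
    induction n with
    | zero => simpa using zeroB
    | succ n ih => rw [pow_succ, addB, ih, succ_nsmul]
  -- A has exponent p
  have hAq : ∀ a : A, (a : G) ^ p = 1 := by
    intro a
    have h1 : φA (a ^ p) = 0 := by rw [powA, psmulA]
    have h2 := (kerA (a ^ p)).mp h1
    simpa [Subgroup.mem_bot] using h2
  -- b^p ∈ A for b ∈ B
  have hBp : ∀ b : B, ((b : G)) ^ p ∈ A := by
    intro b
    have h1 : φBA (b ^ p) = 0 := by rw [powB, psmulB]
    have h2 := (kerB (b ^ p)).mp h1
    simpa using h2
  -- the map f : B → VA, b ↦ φA (b^p)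
  set f : B → VA := fun b => φA ⟨(b : G) ^ p, hBp b⟩ with hf
  have fadd : ∀ b c : B, f (b * c) = f b + f c := by
    intro b c
    have hcomm : Commute (b : G) (c : G) := commG _ _ b.2 c.2
    have hpow : ((b * c : B) : G) ^ p = (b : G) ^ p * (c : G) ^ p := by
      rw [Subgroup.coe_mul, hcomm.mul_pow]
    have : (⟨((b * c : B) : G) ^ p, hBp (b * c)⟩ : A)
        = ⟨(b : G) ^ p, hBp b⟩ * ⟨(c : G) ^ p, hBp c⟩ := by
      ext
      simpa using hpow
    rw [hf]
    dsimp only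
    rw [this, addA]
  have fone : f 1 = 0 := by
    have : (⟨((1 : B) : G) ^ p, hBp 1⟩ : A) = 1 := by
      ext; simp
    rw [hf]; dsimp only; rw [this, zeroA]
  -- well-definedness
  have welldef : ∀ b c : B, φBA b = φBA c → f b = f c := by
    intro b c h
    have h1 : φBA (b * c⁻¹) = 0 := by
      rw [addB, invB, h, add_neg_cancel]
    have h2 : ((b * c⁻¹ : B) : G) ∈ A := (kerB _).mp h1
    have h3 : ((b * c⁻¹ : B) : G) ^ p = 1 := by
      have := hAq ⟨_, h2⟩
      simpa using this
    have hcomm : Commute (b : G) ((c : G)⁻¹) := commG _ _ b.2 (inv_mem c.2)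
    have h4 : (b : G) ^ p * ((c : G) ^ p)⁻¹ = 1 := by
      rw [← inv_pow, ← hcomm.mul_pow]
      simpa using h3
    have h5 : (b : G) ^ p = (c : G) ^ p := by
      rw [← mul_inv_eq_one]
      exact h4
    rw [hf]; dsimp only
    congr 1
    exact Subtype.ext h5
  -- the underlying function of the iso
  set e0 : VBA → VA := fun v => f (Classical.choose (surjB v)) with he0
  have e0spec : ∀ b : B, e0 (φBA b) = f b := by
    intro b
    exact welldef _ b (Classical.choose_spec (surjB (φBA b)))
  have e0add : ∀ v w : VBA, e0 (v + w) = e0 v + e0 w := by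
    intro v w
    obtain ⟨b, rfl⟩ := surjB v
    obtain ⟨c, rfl⟩ := surjB w
    rw [← addB, e0spec, e0spec, e0spec, fadd]
  have e0zero : e0 0 = 0 := by
    have : (0 : VBA) = φBA 1 := zeroB.symm
    rw [this, e0spec, fone]
  -- additive monoid hom
  set E : VBA →+ VA := { toFun := e0, map_zero' := e0zero, map_add' := e0add } with hE
  have e0smul : ∀ (c : ZMod p) (v : VBA), e0 (c • v) = c • e0 v := by
    haveI : NeZero p := ⟨hp.ne_zero⟩
    intro c v
    have hc : ∀ (w : VBA), c • w = c.val • w := by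
      intro w
      rw [← Nat.cast_smul_eq_nsmul (ZMod p) c.val w, ZMod.natCast_val, ZMod.cast_id]
    have hc' : ∀ (w : VA), c • w = c.val • w := by
      intro w
      rw [← Nat.cast_smul_eq_nsmul (ZMod p) c.val w, ZMod.natCast_val, ZMod.cast_id]
    rw [hc, hc']
    exact E.map_nsmul c.val v
  set L : VBA →ₗ[ZMod p] VA :=
    { toFun := e0, map_add' := e0add, map_smul' := e0smul } with hL
  -- injectivity
  have hb0 : ∃ b : B, (b : G) ^ p ≠ 1 := by
    push_neg at hBexp
    obtain ⟨b, hb⟩ := hBexp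
    refine ⟨b, fun h => hb ?_⟩
    ext
    simpa using h
  have kertriv : ∀ v : VBA, L v = 0 → v = 0 := by
    intro v hv
    obtain ⟨b, rfl⟩ := surjB v
    have hfb : f b = 0 := by
      have : L (φBA b) = e0 (φBA b) := rfl
      rw [this, e0spec] at hv
      exact hv
    have hbp : (b : G) ^ p = 1 := by
      have h2 := (kerA ⟨(b : G) ^ p, hBp b⟩).mp hfb
      simpa [Subgroup.mem_bot] using h2
    -- the subgroup N = {x ∈ B | x^p = 1}
    set N : Subgroup G :=
      { carrier := {x | x ∈ B ∧ x ^ p = 1}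
        one_mem' := ⟨one_mem B, one_pow p⟩
        mul_mem' := by
          rintro x y ⟨hxB, hx⟩ ⟨hyB, hy⟩
          exact ⟨mul_mem hxB hyB, by rw [(commG x y hxB hyB).mul_pow, hx, hy, mul_one]⟩
        inv_mem' := by
          rintro x ⟨hxB, hx⟩
          exact ⟨inv_mem hxB, by rw [inv_pow, hx, inv_one]⟩ } with hN
    have Nnorm : N.Normal := by
      constructor
      rintro x ⟨hxB, hx⟩ g
      refine ⟨hBnorm.conj_mem x hxB g, ?_⟩
      rw [conj_pow, hx, mul_one, mul_inv_cancel]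
    have hAN : A ≤ N := by
      intro a ha
      exact ⟨hAB ha, hAq ⟨a, ha⟩⟩
    have hNB : N ≤ B := fun x hx => hx.1
    rcases hB.2.2.2 N Nnorm hAN hNB with hNA | hNB'
    · have : (b : G) ∈ A := by
        rw [← hNA]
        exact ⟨b.2, hbp⟩
      exact (kerB b).mpr this
    · exfalso
      obtain ⟨b0, hb0'⟩ := hb0
      have : (b0 : G) ∈ N := by rw [hNB']; exact b0.2
      exact hb0' this.2
  have Linj : Function.Injective L := by
    intro v w h
    have : L (v - w) = 0 := by rw [map_sub, h, sub_self]
    have := kertriv _ this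
    exact sub_eq_zero.mp this
  -- surjectivity via the subgroup P = {b^p | b ∈ B}
  have Lsurj : Function.Surjective L := by
    set P : Subgroup G :=
      { carrier := {x | ∃ b : B, (b : G) ^ p = x}
        one_mem' := ⟨1, by simp⟩
        mul_mem' := by
          rintro x y ⟨b, rfl⟩ ⟨c, rfl⟩
          exact ⟨b * c, by rw [Subgroup.coe_mul, (commG _ _ b.2 c.2).mul_pow]⟩
        inv_mem' := by
          rintro x ⟨b, rfl⟩
          exact ⟨b⁻¹, by rw [← inv_pow]; rfl⟩ } with hP
    have Pnorm : P.Normal := by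
      constructor
      rintro x ⟨b, rfl⟩ g
      exact ⟨⟨g * (b : G) * g⁻¹, hBnorm.conj_mem _ b.2 g⟩, by rw [conj_pow]⟩
    have hPA : P ≤ A := by
      rintro x ⟨b, rfl⟩
      exact hBp b
    rcases hA.2.2 P Pnorm hPA with hP0 | hPA'
    · exfalso
      obtain ⟨b0, hb0'⟩ := hb0
      have : (b0 : G) ^ p ∈ P := ⟨b0, rfl⟩
      rw [hP0, Subgroup.mem_bot] at this
      exact hb0' this
    · intro v
      obtain ⟨a, rfl⟩ := surjA v
      have : (a : G) ∈ P := by rw [hPA']; exact a.2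
      obtain ⟨b, hb⟩ := this
      refine ⟨φBA b, ?_⟩
      have : L (φBA b) = f b := e0spec b
      rw [this, hf]
      dsimp only
      congr 1
      exact Subtype.ext hb
  -- equivariance
  have Lequiv : ∀ (g : G) (v : VBA), L (ρBA g v) = ρA g (L v) := by
    intro g v
    obtain ⟨b, rfl⟩ := surjB v
    set b' : B := ⟨g * (b : G) * g⁻¹, hBnorm.conj_mem _ b.2 g⟩ with hb'
    have h1 : φBA b' = ρBA g (φBA b) := eqvB g b b' rfl
    have h2 : L (ρBA g (φBA b)) = f b' := by
      rw [← h1]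
      exact e0spec b'
    have h3 : ((b' : G)) ^ p = g * ((b : G) ^ p) * g⁻¹ := by
      rw [hb']
      exact conj_pow
    have h4 : φA ⟨(b' : G) ^ p, hBp b'⟩ = ρA g (φA ⟨(b : G) ^ p, hBp b⟩) := by
      refine eqvA g ⟨(b : G) ^ p, hBp b⟩ ⟨(b' : G) ^ p, hBp b'⟩ ?_
      exact h3
    rw [h2, hf]
    dsimp only
    rw [h4]
    congr 1
    exact (e0spec b).symm
  refine ⟨LinearEquiv.ofBijective L ⟨Linj, Lsurj⟩, ?_, ?_⟩
  · intro g v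
    exact Lequiv g v
  · intro b
    exact ⟨hBp b, e0spec b⟩
end

section
/- Let G be a finite p-soluble group, let A be a minimal normal subgroup of G, and let V and W be irreducible F_p G-modules such that A acts trivially on V and non-trivially on W. Then every extension of V by W splits and every extension of W by V splits; equivalently, every short exact sequence of F_p G-modules 0 → V → X → W → 0 and every short exact sequence 0 → W → X → V → 0 splits. -/
open Function TensorProduct

section AuxBarnes

variable {p : ℕ} [Fact p.Prime] {G : Type} [Group G] (A : Subgroup G) [Fintype A]

/-- The averaging operator over the subgroup `A`. -/
noncomputable def avgMap {X : Type} [AddCommGroup X] [Module (ZMod p) X]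
    (ρ : Representation (ZMod p) G X) : X →ₗ[ZMod p] X :=
  (Fintype.card A : ZMod p)⁻¹ • ∑ a : A, (ρ (a : G))

lemma avgMap_apply {X : Type} [AddCommGroup X] [Module (ZMod p) X]
    (ρ : Representation (ZMod p) G X) (x : X) :
    avgMap A ρ x = (Fintype.card A : ZMod p)⁻¹ • ∑ a : A, ρ (a : G) x := by
  simp [avgMap, LinearMap.sum_apply]

lemma avgMap_fixed {X : Type} [AddCommGroup X] [Module (ZMod p) X]
    (ρ : Representation (ZMod p) G X) (a : A) (x : X) :
    ρ (a : G) (avgMap A ρ x) = avgMap A ρ x := by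
  rw [avgMap_apply, map_smul, map_sum]
  congr 1
  refine Fintype.sum_equiv (Equiv.mulLeft a) _ _ fun b => ?_
  have h1 : ρ ((a : G) * (b : G)) = ρ (a : G) * ρ (b : G) := map_mul _ _ _
  simp only [Equiv.coe_mulLeft, Subgroup.coe_mul, h1, Module.End.mul_apply]

lemma avgMap_conj {X : Type} [AddCommGroup X] [Module (ZMod p) X]
    (hN : A.Normal) (ρ : Representation (ZMod p) G X) (g : G) (x : X) :
    avgMap A ρ (ρ g x) = ρ g (avgMap A ρ x) := by
  rw [avgMap_apply, avgMap_apply, map_smul, map_sum]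
  congr 1
  have key : ∀ u v : G, ρ u (ρ v x) = ρ (u * v) x := fun u v => by
    rw [map_mul]; rfl
  haveI := hN
  refine Fintype.sum_equiv (MulAut.conjNormal g⁻¹).toEquiv _ _ fun b => ?_
  have hb : ((MulAut.conjNormal g⁻¹ b : A) : G) = g⁻¹ * (b : G) * g := by
    simp
  simp only [MulEquiv.toEquiv_eq_coe, MulEquiv.coe_toEquiv, hb, key]
  congr 1
  group

lemma avgMap_comm {X Y : Type} [AddCommGroup X] [Module (ZMod p) X]
    [AddCommGroup Y] [Module (ZMod p) Y]
    (ρX : Representation (ZMod p) G X) (ρY : Representation (ZMod p) G Y)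
    (f : X →ₗ[ZMod p] Y) (hf : ∀ (g : G) (x : X), f (ρX g x) = ρY g (f x)) (x : X) :
    f (avgMap A ρX x) = avgMap A ρY (f x) := by
  rw [avgMap_apply, avgMap_apply, map_smul, map_sum]
  simp only [hf]

lemma avgMap_of_fixed {X : Type} [AddCommGroup X] [Module (ZMod p) X]
    (hcard : (Fintype.card A : ZMod p) ≠ 0)
    (ρ : Representation (ZMod p) G X) (x : X) (hx : ∀ a : A, ρ (a : G) x = x) :
    avgMap A ρ x = x := by
  rw [avgMap_apply]
  simp only [hx]
  rw [Finset.sum_const, Finset.card_univ, ← Nat.cast_smul_eq_nsmul (ZMod p), smul_smul,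
    inv_mul_cancel₀ hcard, one_smul]

variable {V W : Type} [AddCommGroup V] [Module (ZMod p) V] [AddCommGroup W] [Module (ZMod p) W]
variable {ρV : Representation (ZMod p) G V} {ρW : Representation (ZMod p) G W}

/-- If the sub-representation is `A`-trivial and the quotient has no nonzero `A`-fixed
vectors (`A` of order invertible in `ZMod p`), the extension splits. -/
lemma splits_sub_triv (hN : A.Normal) (hcard : (Fintype.card A : ZMod p) ≠ 0)
    (hVtriv : ∀ a : A, ∀ v : V, ρV (a : G) v = v)
    (hW0 : ∀ w : W, (∀ a : A, ρW (a : G) w = w) → w = 0)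
    (E : RepExtension ρV ρW) : E.Splits := by
  obtain ⟨σ, hσ⟩ := E.π.exists_rightInverse_of_surjective (LinearMap.range_eq_top.2 E.hπ)
  have hσ' : ∀ x, E.π (σ x) = x := fun x => DFunLike.congr_fun hσ x
  have heW : ∀ w : W, avgMap A ρW w = 0 := fun w => hW0 _ fun a => avgMap_fixed A ρW a w
  refine ⟨(LinearMap.id - avgMap A E.ρX) ∘ₗ σ, ?_, ?_⟩
  · intro g w
    simp only [LinearMap.comp_apply, LinearMap.sub_apply, LinearMap.id_apply, map_sub]
    have h6 : avgMap A E.ρX (E.ρX g (σ w)) = E.ρX g (avgMap A E.ρX (σ w)) :=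
      avgMap_conj A hN E.ρX g (σ w)
    have hu : σ (ρW g w) - E.ρX g (σ w) ∈ LinearMap.ker E.π := by
      rw [LinearMap.mem_ker, map_sub, hσ', E.hπEquiv, hσ', sub_self]
    rw [← E.hexact] at hu
    obtain ⟨v, hv⟩ := hu
    have h5 : avgMap A E.ρX (σ (ρW g w) - E.ρX g (σ w)) = σ (ρW g w) - E.ρX g (σ w) := by
      rw [← hv, ← avgMap_comm A ρV E.ρX E.i E.hiEquiv v,
        avgMap_of_fixed A hcard ρV v (fun a => hVtriv a v)]
    have h8 : avgMap A E.ρX (σ (ρW g w)) - avgMap A E.ρX (E.ρX g (σ w))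
        = σ (ρW g w) - E.ρX g (σ w) := by rw [← map_sub]; exact h5
    rw [← h6, eq_add_of_sub_eq h8]
    abel
  · ext w
    simp only [LinearMap.comp_apply, LinearMap.sub_apply, LinearMap.id_apply, map_sub,
      LinearMap.id_coe, id_eq]
    rw [hσ', avgMap_comm A E.ρX ρW E.π E.hπEquiv, hσ', heW, sub_zero]

/-- If the quotient representation is `A`-trivial and the sub-representation has no nonzero
`A`-fixed vectors (`A` of order invertible in `ZMod p`), the extension splits. -/
lemma splits_quot_triv (hN : A.Normal) (hcard : (Fintype.card A : ZMod p) ≠ 0)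
    (hVtriv : ∀ a : A, ∀ v : V, ρV (a : G) v = v)
    (hW0 : ∀ w : W, (∀ a : A, ρW (a : G) w = w) → w = 0)
    (E : RepExtension ρW ρV) : E.Splits := by
  obtain ⟨σ, hσ⟩ := E.π.exists_rightInverse_of_surjective (LinearMap.range_eq_top.2 E.hπ)
  have hσ' : ∀ x, E.π (σ x) = x := fun x => DFunLike.congr_fun hσ x
  have heW : ∀ w : W, avgMap A ρW w = 0 := fun w => hW0 _ fun a => avgMap_fixed A ρW a w
  refine ⟨avgMap A E.ρX ∘ₗ σ, ?_, ?_⟩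
  · intro g v
    simp only [LinearMap.comp_apply]
    have hu : σ (ρV g v) - E.ρX g (σ v) ∈ LinearMap.ker E.π := by
      rw [LinearMap.mem_ker, map_sub, hσ', E.hπEquiv, hσ', sub_self]
    rw [← E.hexact] at hu
    obtain ⟨w, hw⟩ := hu
    have h0 : avgMap A E.ρX (σ (ρV g v) - E.ρX g (σ v)) = 0 := by
      rw [← hw, ← avgMap_comm A ρW E.ρX E.i E.hiEquiv w, heW, map_zero]
    rw [← avgMap_conj A hN E.ρX g (σ v), ← sub_eq_zero, ← map_sub]
    exact h0
  · ext v
    simp only [LinearMap.comp_apply, LinearMap.id_coe, id_eq]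
    rw [avgMap_comm A E.ρX ρV E.π E.hπEquiv, hσ',
      avgMap_of_fixed A hcard ρV v (fun a => hVtriv a v)]

end AuxBarnes

/-- Barnes, Lemma 2.4. Let `G` be a finite `p`-soluble group, `A` a minimal
normal subgroup of `G`, and `V, W` irreducible `𝔽_p G`-modules with `A` acting trivially on `V`
and non-trivially on `W`. Then every extension of `V` by `W` and every extension of `W` by `V`
splits. -/
theorem extensions_split_of_socle_acts_differently
    (p : ℕ) (hp : p.Prime) (G : Type) [Group G] [Finite G]
    (hGsol : IsPSoluble p G)
    (A : Subgroup G) (hA : IsMinimalNormalSubgroup G A)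
    (V : Type) [AddCommGroup V] [Module (ZMod p) V] [Module.Finite (ZMod p) V]
    (W : Type) [AddCommGroup W] [Module (ZMod p) W] [Module.Finite (ZMod p) W]
    (ρV : Representation (ZMod p) G V) (ρW : Representation (ZMod p) G W)
    (hVirr : IsIrreducibleRep ρV) (hWirr : IsIrreducibleRep ρW)
    (hVtriv : ∀ a ∈ A, ∀ v : V, ρV a v = v)
    (hWnontriv : ¬ ∀ a ∈ A, ∀ w : W, ρW a w = w) :
    (∀ E : RepExtension ρV ρW, E.Splits) ∧ (∀ E : RepExtension ρW ρV, E.Splits) := by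
  haveI : Fact p.Prime := ⟨hp⟩
  haveI : Fintype A := Fintype.ofFinite A
  obtain ⟨hAnorm, hAne, hAmin⟩ := hA
  -- No nonzero `A`-fixed vectors in `W`.
  have key : ∀ u v : G, ∀ x : W, ρW u (ρW v x) = ρW (u * v) x := fun u v x => by
    rw [map_mul]; rfl
  have hCW : ∀ w : W, (∀ a ∈ A, ρW a w = w) → w = 0 := by
    set CW : Submodule (ZMod p) W :=
      { carrier := {w | ∀ a ∈ A, ρW a w = w}
        add_mem' := fun hx hy a ha => by rw [map_add, hx a ha, hy a ha]
        zero_mem' := fun a ha => map_zero _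
        smul_mem' := fun c w hw a ha => by rw [map_smul, hw a ha] } with hCWdef
    have hinv : ∀ (g : G), ∀ w ∈ CW, ρW g w ∈ CW := by
      intro g w hw a ha
      have h1 : g⁻¹ * a * g ∈ A := by
        have := hAnorm.conj_mem a ha g⁻¹
        simpa [mul_assoc] using this
      have h2 := hw _ h1
      calc ρW a (ρW g w) = ρW (a * g) w := key a g w
        _ = ρW (g * (g⁻¹ * a * g)) w := by congr 1; group
        _ = ρW g (ρW (g⁻¹ * a * g) w) := (key _ _ w).symm
        _ = ρW g w := by rw [h2]
    rcases hWirr.2 CW hinv with hbot | htop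
    · intro w hw
      have hmem : w ∈ CW := hw
      rw [hbot] at hmem
      simpa using hmem
    · exfalso
      apply hWnontriv
      intro a ha w
      have hwC : w ∈ CW := by rw [htop]; trivial
      exact hwC a ha
  -- `A` is a chief factor, hence of order a power of `p` or coprime to `p`.
  have hchief : IsChiefFactor G A ⊥ :=
    ⟨hAnorm, inferInstance, bot_lt_iff_ne_bot.mpr hAne, fun N hN _ hNA => hAmin N hN hNA⟩
  -- The order of `A` is not divisible by `p`.
  have hcardA : ¬ p ∣ Nat.card A := by
    rcases hGsol A ⊥ hchief with ⟨n, hn⟩ | hco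
    · -- `A` would be a normal `p`-subgroup, acting trivially on `W`: contradiction.
      exfalso
      rw [Subgroup.relIndex_bot_left] at hn
      haveI : Finite W := Module.finite_of_finite (ZMod p)
      haveI : Fintype W := Fintype.ofFinite W
      haveI : Nontrivial W := hWirr.1
      letI : MulAction A W :=
        { smul := fun a w => ρW (a : G) w
          one_smul := fun w => by
            show ρW ((1 : A) : G) w = w
            simp
          mul_smul := fun a b w => by
            show ρW ((a * b : A) : G) w = ρW (a : G) (ρW (b : G) w)
            rw [Subgroup.coe_mul, key]
          }
      have hpg : IsPGroup p A := IsPGroup.of_card hn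
      have hmod := hpg.card_modEq_card_fixedPoints W
      have hdvdW : p ∣ Nat.card W := by
        rw [Nat.card_eq_fintype_card, Module.card_eq_pow_finrank (K := ZMod p) (V := W), ZMod.card]
        exact dvd_pow_self p (Module.finrank_pos (R := ZMod p) (M := W)).ne'
      have hdvdF : p ∣ Nat.card (MulAction.fixedPoints A W) :=
        Nat.modEq_zero_iff_dvd.mp (hmod.symm.trans (Nat.modEq_zero_iff_dvd.mpr hdvdW))
      haveI hss : Subsingleton (MulAction.fixedPoints A W) := by
        constructor
        rintro ⟨w, hw⟩ ⟨w', hw'⟩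
        have h1 : w = 0 := hCW w fun a ha => (MulAction.mem_fixedPoints.mp hw) ⟨a, ha⟩
        have h2 : w' = 0 := hCW w' fun a ha => (MulAction.mem_fixedPoints.mp hw') ⟨a, ha⟩
        exact Subtype.ext (h1.trans h2.symm)
      have h0mem : (0 : W) ∈ MulAction.fixedPoints A W :=
        MulAction.mem_fixedPoints.mpr fun a => map_zero (ρW (a : G))
      have hone : Nat.card (MulAction.fixedPoints A W) = 1 :=
        Nat.card_eq_one_iff_unique.mpr ⟨hss, ⟨⟨0, h0mem⟩⟩⟩
      rw [hone, Nat.dvd_one] at hdvdF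
      exact hp.one_lt.ne' hdvdF
    · rw [Subgroup.relIndex_bot_left] at hco
      exact (Nat.Prime.coprime_iff_not_dvd hp).mp hco.symm
  have hcard : (Fintype.card A : ZMod p) ≠ 0 := by
    rw [← Nat.card_eq_fintype_card, Ne, ZMod.natCast_eq_zero_iff]
    exact hcardA
  have hVtriv' : ∀ a : A, ∀ v : V, ρV (a : G) v = v := fun a v => hVtriv a a.2 v
  have hW0 : ∀ w : W, (∀ a : A, ρW (a : G) w = w) → w = 0 := fun w hw =>
    hCW w fun a ha => hw ⟨a, ha⟩
  exact ⟨fun E => splits_sub_triv A hAnorm hcard hVtriv' hW0 E,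
    fun E => splits_quot_triv A hAnorm hcard hVtriv' hW0 E⟩
end

section
/- Let G be a finite p-soluble group, let A be a minimal normal subgroup of G, and let V be an irreducible F_p G-module lying in the principal block B_0(F_p G). Then A acts trivially on V. -/
open Function TensorProduct

section AuxAverage

variable {k G : Type} [Field k] [Group G] {X : Type} [AddCommGroup X] [Module k X]

/-- The averaging operator over a finite subgroup `A`. -/
noncomputable def avgOp (ρX : Representation k G X) (A : Subgroup G) [Fintype A] :
    X →ₗ[k] X :=
  (Nat.card A : k)⁻¹ • ∑ a : A, ρX (a : G)

variable (ρX : Representation k G X) (A : Subgroup G) [Fintype A]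

lemma avgOp_apply (x : X) :
    avgOp ρX A x = (Nat.card A : k)⁻¹ • ∑ a : A, ρX (a : G) x := by
  simp [avgOp]

lemma rep_mul_apply (u v : G) (x : X) : ρX (u * v) x = ρX u (ρX v x) := by
  rw [map_mul]; rfl

lemma avgOp_fixed (b : A) (x : X) : ρX (b : G) (avgOp ρX A x) = avgOp ρX A x := by
  rw [avgOp_apply, map_smul, map_sum]
  congr 1
  refine Fintype.sum_bijective (fun a => b * a) (Group.mulLeft_bijective b) _ _ fun a => ?_
  rw [Subgroup.coe_mul, rep_mul_apply]

lemma avgOp_conj (hAn : A.Normal) (g : G) (x : X) :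
    avgOp ρX A (ρX g x) = ρX g (avgOp ρX A x) := by
  have hL := avgOp_apply ρX A (ρX g x)
  have hR := avgOp_apply ρX A x
  rw [hL, hR, map_smul, map_sum]
  congr 1
  haveI := hAn
  refine Fintype.sum_bijective (fun a => MulAut.conjNormal g⁻¹ a)
    (MulEquiv.bijective _) _ _ fun a => ?_
  have hcoe : ((MulAut.conjNormal g⁻¹ a : A) : G) = g⁻¹ * (a : G) * g := by
    rw [MulAut.conjNormal_apply]; group
  rw [hcoe, ← rep_mul_apply, ← rep_mul_apply]
  congr 1
  group

lemma avgOp_of_fixed (hc : (Nat.card A : k) ≠ 0) (x : X)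
    (hx : ∀ a : A, ρX (a : G) x = x) : avgOp ρX A x = x := by
  rw [avgOp_apply, Finset.sum_congr rfl (fun a _ => hx a), Finset.sum_const,
    Finset.card_univ, ← Nat.card_eq_fintype_card, ← Nat.cast_smul_eq_nsmul k,
    smul_smul, inv_mul_cancel₀ hc, one_smul]

lemma avgOp_map {W : Type} [AddCommGroup W] [Module k W] (ρW : Representation k G W)
    (f : W →ₗ[k] X) (hf : ∀ (g : G) (w : W), f (ρW g w) = ρX g (f w)) (w : W) :
    avgOp ρX A (f w) = f (avgOp ρW A w) := by
  rw [avgOp_apply, avgOp_apply, map_smul, map_sum]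
  congr 1
  exact Finset.sum_congr rfl fun a _ => (hf _ _).symm

end AuxAverage

/-- The fixed points of a normal subgroup on an irreducible representation are everything
or only zero. -/
lemma fixed_submodule_dichotomy {k G : Type} [Field k] [Group G] {A : Subgroup G}
    (hAn : A.Normal) {V : Type} [AddCommGroup V] [Module k V]
    {ρ : Representation k G V} (hirr : IsIrreducibleRep ρ) :
    (∀ a ∈ A, ∀ v : V, ρ a v = v) ∨ ∀ v : V, (∀ a ∈ A, ρ a v = v) → v = 0 := by
  set S : Submodule k V :=
    { carrier := {v | ∀ a ∈ A, ρ a v = v}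
      add_mem' := fun hx hy => fun a ha => by
        rw [map_add, hx a ha, hy a ha]
      zero_mem' := fun a ha => map_zero _
      smul_mem' := fun c v hv => fun a ha => by
        rw [map_smul, hv a ha] } with hSdef
  have hmem : ∀ v : V, v ∈ S ↔ ∀ a ∈ A, ρ a v = v := fun v => Iff.rfl
  have hinv : ∀ (g : G), ∀ v ∈ S, ρ g v ∈ S := by
    intro g v hv
    rw [hmem] at hv ⊢
    intro a ha
    have h1 : g⁻¹ * a * g ∈ A := by simpa using hAn.conj_mem a ha g⁻¹
    have h2 : ρ (a * g) v = ρ (g * (g⁻¹ * a * g)) v := by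
      congr 1; group
    rw [rep_mul_apply, rep_mul_apply, hv _ h1] at h2
    exact h2
  rcases hirr.2 S hinv with hbot | htop
  · right
    intro v hv
    have : v ∈ S := (hmem v).2 hv
    rwa [hbot, Submodule.mem_bot] at this
  · left
    intro a ha v
    exact (hmem v).1 (htop ▸ Submodule.mem_top) a ha

/-- If there is a `G`-equivariant endomorphism `q` of the middle term of an extension which
agrees with `π` after `π` and kills `ker π`, then the extension splits. -/
lemma RepExtension.splits_of_proj {k G W V : Type} [Field k] [Monoid G]
    [AddCommGroup W] [Module k W] [AddCommGroup V] [Module k V]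
    {ρW : Representation k G W} {ρV : Representation k G V}
    (E : RepExtension ρW ρV) (q : E.X →ₗ[k] E.X)
    (hq : ∀ (g : G) (x : E.X), q (E.ρX g x) = E.ρX g (q x))
    (hπq : ∀ x, E.π (q x) = E.π x)
    (hker : ∀ x, E.π x = 0 → q x = 0) : E.Splits := by
  obtain ⟨s₀, hs₀⟩ := E.π.exists_rightInverse_of_surjective (LinearMap.range_eq_top.2 E.hπ)
  have hs₀' : ∀ v, E.π (s₀ v) = v := fun v => congrArg (fun f => f v) hs₀
  refine ⟨q ∘ₗ s₀, ?_, ?_⟩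
  · intro g v
    have hd : E.π (s₀ (ρV g v) - E.ρX g (s₀ v)) = 0 := by
      rw [map_sub, hs₀', E.hπEquiv, hs₀', sub_self]
    have h0 := hker _ hd
    rw [map_sub, sub_eq_zero] at h0
    simp only [LinearMap.comp_apply]
    rw [h0, hq]
  · ext v
    simp only [LinearMap.comp_apply, LinearMap.id_apply, hπq, hs₀']

/-- Key step: with `A` a normal subgroup of order prime to `p`, if two representations are
linked, `M` is irreducible and `A` acts trivially on `N`, then `A` acts trivially on `M`. -/
lemma fixed_of_linked {p : ℕ} {G : Type} [Group G] [Finite G]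
    {A : Subgroup G} (hAn : A.Normal) (hc : (Nat.card A : ZMod p) ≠ 0)
    [Fact p.Prime]
    {M N : BRep (ZMod p) G} (hM : IsIrreducibleRep M.ρ)
    (hlink : LinkedRep M.ρ N.ρ)
    (hN : ∀ a ∈ A, ∀ v : N.V, N.ρ a v = v) :
    ∀ a ∈ A, ∀ v : M.V, M.ρ a v = v := by
  haveI : Fintype A := Fintype.ofFinite A
  rcases fixed_submodule_dichotomy hAn hM with hl | hMfix
  · exact hl
  exfalso
  rcases hlink with ⟨E, hns⟩ | ⟨E, hns⟩
  · -- `0 → M → X → N → 0`; use `q = avgOp`.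
    refine hns (E.splits_of_proj (avgOp E.ρX A) (fun g x => avgOp_conj E.ρX A hAn g x) ?_ ?_)
    · intro x
      have h1 : avgOp N.ρ A (E.π x) = E.π (avgOp E.ρX A x) :=
        avgOp_map N.ρ A E.ρX E.π E.hπEquiv x
      have h2 : avgOp N.ρ A (E.π x) = E.π x :=
        avgOp_of_fixed N.ρ A hc _ (fun a => hN a a.2 _)
      rw [← h1, h2]
    · intro x hx
      have hxr : x ∈ LinearMap.range E.i := by rw [E.hexact]; exact hx
      obtain ⟨w, rfl⟩ := hxr
      have h1 : avgOp E.ρX A (E.i w) = E.i (avgOp M.ρ A w) :=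
        avgOp_map E.ρX A M.ρ E.i E.hiEquiv w
      have h2 : avgOp M.ρ A w = 0 :=
        hMfix _ (fun a ha => avgOp_fixed M.ρ A ⟨a, ha⟩ w)
      rw [h1, h2, map_zero]
  · -- `0 → N → X → M → 0`; use `q = id - avgOp`.
    refine hns (E.splits_of_proj (LinearMap.id - avgOp E.ρX A) ?_ ?_ ?_)
    · intro g x
      simp only [LinearMap.sub_apply, LinearMap.id_apply, map_sub,
        avgOp_conj E.ρX A hAn g x]
    · intro x
      have h1 : avgOp M.ρ A (E.π x) = E.π (avgOp E.ρX A x) :=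
        avgOp_map M.ρ A E.ρX E.π E.hπEquiv x
      have h2 : avgOp M.ρ A (E.π x) = 0 :=
        hMfix _ (fun a ha => avgOp_fixed M.ρ A ⟨a, ha⟩ _)
      simp only [LinearMap.sub_apply, LinearMap.id_apply, map_sub]
      rw [← h1, h2, sub_zero]
    · intro x hx
      have hxr : x ∈ LinearMap.range E.i := by rw [E.hexact]; exact hx
      obtain ⟨w, rfl⟩ := hxr
      have h1 : avgOp E.ρX A (E.i w) = E.i (avgOp N.ρ A w) :=
        avgOp_map E.ρX A N.ρ E.i E.hiEquiv w
      have h2 : avgOp N.ρ A w = w :=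
        avgOp_of_fixed N.ρ A hc _ (fun a => hN a a.2 _)
      simp only [LinearMap.sub_apply, LinearMap.id_apply]
      rw [h1, h2, sub_self]

/-- Barnes, Corollary 2.5. Let `G` be a finite `p`-soluble group, `A` a
minimal normal subgroup of `G`, and `V` an irreducible `𝔽_p G`-module in the principal block.
Then `A` acts trivially on `V`. -/
theorem minimal_normal_acts_trivially_of_principalBlock
    (p : ℕ) (hp : p.Prime) (G : Type) [Group G] [Finite G]
    (hGsol : IsPSoluble p G)
    (A : Subgroup G) (hA : IsMinimalNormalSubgroup G A)
    (V : Type) [AddCommGroup V] [Module (ZMod p) V] [Module.Finite (ZMod p) V]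
    (ρ : Representation (ZMod p) G V)
    (h : InPrincipalBlock (BRep.of ρ)) :
    ∀ a ∈ A, ∀ v : V, ρ a v = v := by
  haveI : Fact p.Prime := ⟨hp⟩
  obtain ⟨hAn, hAne, hAmin⟩ := hA
  have hchief : IsChiefFactor G A ⊥ :=
    ⟨hAn, inferInstance, bot_lt_iff_ne_bot.2 hAne,
      fun N hNn _ hNA => hAmin N hNn hNA⟩
  have hrel : (⊥ : Subgroup G).relIndex A = Nat.card A := Subgroup.relIndex_bot_left A
  have hirr : IsIrreducibleRep ρ := h.1
  rcases hGsol A ⊥ hchief with ⟨n, hn⟩ | hcop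
  · -- `A` is a `p`-group: it has a nonzero fixed point, and the fixed submodule is invariant.
    rw [hrel] at hn
    rcases fixed_submodule_dichotomy hAn hirr with hl | hMfix
    · exact hl
    exfalso
    haveI : Finite V := Module.finite_of_finite (ZMod p)
    haveI : Nontrivial V := hirr.1
    letI : MulAction A V :=
      { smul := fun a v => ρ (a : G) v
        one_smul := fun v => by
          show ρ ((1 : A) : G) v = v
          rw [OneMemClass.coe_one, map_one]; rfl
        mul_smul := fun a b v => by
          show ρ ((a * b : A) : G) v = ρ (a : G) (ρ (b : G) v)
          rw [Subgroup.coe_mul, rep_mul_apply] }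
    have hPG : IsPGroup p A := IsPGroup.of_card hn
    have hpV : p ∣ Nat.card V := by
      haveI : Fintype V := Fintype.ofFinite V
      rw [Nat.card_eq_fintype_card, Module.card_eq_pow_finrank (K := ZMod p) (V := V), ZMod.card]
      exact dvd_pow_self p Module.finrank_pos.ne'
    have h0fix : (0 : V) ∈ MulAction.fixedPoints A V := by
      intro a
      show ρ (a : G) 0 = 0
      exact map_zero _
    obtain ⟨b, hbfix, hb0⟩ :=
      hPG.exists_fixed_point_of_prime_dvd_card_of_fixed_point (α := V) hpV h0fix
    refine hb0 ?_
    have : b = 0 := hMfix b (fun a ha => hbfix ⟨a, ha⟩)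
    rw [this]
  · -- `A` has order prime to `p`: induct along the chain to the trivial module.
    rw [hrel] at hcop
    have hcne : (Nat.card A : ZMod p) ≠ 0 := by
      rw [Ne, ZMod.natCast_eq_zero_iff]
      exact hp.coprime_iff_not_dvd.1 hcop.symm
    suffices hsuf : ∀ M : BRep (ZMod p) G,
        Relation.ReflTransGen BlockRel M (trivialBRep (ZMod p) G) →
        ∀ a ∈ A, ∀ v : M.V, M.ρ a v = v by
      exact hsuf (BRep.of ρ) h.2.2
    intro M hM
    induction hM using Relation.ReflTransGen.head_induction_on with
    | refl => intro a _ v; rfl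
    | head h' _ ih => exact fixed_of_linked hAn hcne h'.1 h'.2.2 ih
end

section
/- Let A/B be a complemented p-chief factor of the finite p-soluble group G. Then the F_p G-module [A/B] lies in the principal block B_0(F_p G); indeed H^1(G, [A/B]) ≠ 0, so [A/B] is directly linked to the trivial module. -/
open Function TensorProduct

section CocycleAux

variable {k G V : Type} [CommRing k] [Group G] [AddCommGroup V] [Module k V]

/-- The representation on `V × k` determined by a 1-cocycle `d : G → V`. -/
noncomputable def cocycleRep (ρ : Representation k G V) (d : G → V)
    (hcoc : ∀ g h : G, d (g * h) = ρ g (d h) + d g) : Representation k G (V × k) where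
  toFun g :=
    { toFun := fun x => (ρ g x.1 + x.2 • d g, x.2)
      map_add' := fun x y => by
        refine Prod.ext ?_ rfl
        simp [add_smul]
        abel
      map_smul' := fun c x => by
        refine Prod.ext ?_ rfl
        simp [smul_add, smul_smul] }
  map_one' := by
    have h1 : d 1 = 0 := by
      have h := hcoc 1 1
      rw [one_mul] at h
      have h2 : ρ 1 (d 1) = 0 := by
        have := h.symm
        rwa [add_eq_right] at this
      simpa using h2
    refine LinearMap.ext fun x => Prod.ext ?_ rfl
    simp [h1]
  map_mul' g h := by
    refine LinearMap.ext fun x => Prod.ext ?_ rfl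
    simp only [LinearMap.coe_mk, AddHom.coe_mk, Module.End.mul_apply, map_mul]
    rw [hcoc g h]
    simp [smul_add, map_add, map_smul, Module.End.mul_apply]
    abel

theorem nonsplit_ext_of_cocycle (ρ : Representation k G V) (d : G → V)
    (hcoc : ∀ g h : G, d (g * h) = ρ g (d h) + d g)
    (hnb : ¬ ∃ x : V, ∀ g : G, ρ g x - x = d g) :
    ∃ E : RepExtension ρ (Representation.trivial k (G := G) (V := k)), ¬ E.Splits := by
  refine ⟨{ X := V × k
            ρX := cocycleRep ρ d hcoc
            i := LinearMap.inl k V k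
            π := LinearMap.snd k V k
            hi := LinearMap.inl_injective
            hπ := fun c => ⟨(0, c), rfl⟩
            hexact := LinearMap.range_inl k V k
            hiEquiv := fun g w => by
              show ((ρ g w, (0:k)) : V × k) = (ρ g w + (0:k) • d g, (0:k))
              simp
            hπEquiv := fun g x => rfl }, ?_⟩
  rintro ⟨s, hsE, hπs⟩
  have h2 : (s 1).2 = 1 := LinearMap.ext_iff.mp hπs 1
  have h3 : ∀ g : G, (s 1).1 = ρ g (s 1).1 + d g := by
    intro g
    have h := hsE g 1
    have h' : s 1 = (ρ g (s 1).1 + (s 1).2 • d g, (s 1).2) := h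
    have := congrArg Prod.fst h'
    rwa [h2, one_smul] at this
  refine hnb ⟨-(s 1).1, fun g => ?_⟩
  rw [map_neg, sub_neg_eq_add, neg_add_eq_sub, sub_eq_iff_eq_add']
  exact h3 g

end CocycleAux

/-- Barnes, Lemma 2.6. Let `A/B` be a complemented `p`-chief factor of the
finite `p`-soluble group `G`. Then `H¹(G, [A/B]) ≠ 0`, so `[A/B]` is directly linked to the
trivial module, and in particular `[A/B]` lies in the principal block `B₀(𝔽_p G)`. -/
theorem complemented_chief_factor_mem_principalBlock
    (p : ℕ) (hp : p.Prime) (G : Type) [Group G] [Finite G]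
    (hGsol : IsPSoluble p G)
    (A B : Subgroup G)
    (hcompl : ∃ U : Subgroup G, U ⊓ A = B ∧ U ⊔ A = ⊤)
    (V : Type) [AddCommGroup V] [Module (ZMod p) V] [Module.Finite (ZMod p) V]
    (ρ : Representation (ZMod p) G V)
    (hV : IsChiefFactorRep p A B ρ) :
    Nontrivial (groupCohomology.H1 (Rep.of ρ)) ∧
      BlockRel (BRep.of ρ) (trivialBRep (ZMod p) G) ∧
      InPrincipalBlock (BRep.of ρ) := by
  classical
  haveI := Fact.mk hp
  haveI := Fact.mk hp.one_lt
  obtain ⟨U, hUA, hUsup⟩ := hcompl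
  obtain ⟨φ, hCF, hadd, hsurj, hker, hequiv⟩ := hV
  obtain ⟨hAnorm, hBnorm, hBA, hmin⟩ := hCF
  haveI := hAnorm
  have hBle : B ≤ A := hBA.le
  -- basic additivity facts
  have hφ1 : φ 1 = 0 := by
    have h := hadd 1 1
    rw [mul_one] at h
    exact (left_eq_add.mp h)
  have hinv : ∀ a : A, φ a⁻¹ = -φ a := by
    intro a
    have h := hadd a⁻¹ a
    rw [inv_mul_cancel, hφ1] at h
    exact eq_neg_of_add_eq_zero_left h.symm
  -- A acts trivially on V
  have hAtriv : ∀ (a : A) (v : V), ρ (↑a) v = v := by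
    intro a v
    obtain ⟨b, rfl⟩ := hsurj v
    have h := hequiv (↑a) b (a * b * a⁻¹) rfl
    rw [hadd, hadd, hinv] at h
    rw [← h]
    abel
  -- an element of A with nonzero image
  obtain ⟨g0, hg0A, hg0B⟩ := SetLike.exists_of_lt hBA
  set a0 : A := ⟨g0, hg0A⟩ with ha0
  have hφa0 : φ a0 ≠ 0 := fun h => hg0B ((hker a0).1 h)
  have hVnt : Nontrivial V := ⟨φ a0, 0, hφa0⟩
  -- decomposition G = A * U
  have hdecomp : ∀ g : G, ∃ (a : A) (u : G), u ∈ U ∧ g = ↑a * u := by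
    intro g
    have hg : g ∈ (↑(A ⊔ U) : Set G) := by
      have : A ⊔ U = ⊤ := by rw [sup_comm]; exact hUsup
      rw [this]; trivial
    rw [Subgroup.normal_mul] at hg
    obtain ⟨a, ha, u, hu, hgu⟩ := hg
    exact ⟨⟨a, ha⟩, u, hu, hgu.symm⟩
  choose aOf uOf huU hgdec using hdecomp
  set d : G → V := fun g => φ (aOf g) with hd_def
  -- well-definedness
  have hwd : ∀ (g : G) (a : A) (u : G), u ∈ U → g = ↑a * u → d g = φ a := by
    intro g a u hu hgau
    have h1 : (↑(aOf g) : G) * uOf g = ↑a * u := (hgdec g).symm.trans hgau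
    have h2 : ((a⁻¹ * aOf g : A) : G) = u * (uOf g)⁻¹ := by
      have h := congrArg (fun x => (↑a : G)⁻¹ * x * (uOf g)⁻¹) h1
      simpa [mul_assoc] using h
    have h3 : ((a⁻¹ * aOf g : A) : G) ∈ B := by
      rw [← hUA, Subgroup.mem_inf]
      exact ⟨h2 ▸ mul_mem hu (inv_mem (huU g)), (a⁻¹ * aOf g : A).2⟩
    have h4 : φ (a⁻¹ * aOf g) = 0 := (hker _).2 h3
    rw [hadd, hinv] at h4
    calc φ (aOf g) = φ a + (-φ a + φ (aOf g)) := by abel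
      _ = φ a := by rw [h4, add_zero]
  -- the cocycle identity
  have hcoc : ∀ g h : G, d (g * h) = ρ g (d h) + d g := by
    intro g h
    have hc : (uOf g * ↑(aOf h) * (uOf g)⁻¹) ∈ A := hAnorm.conj_mem _ (aOf h).2 (uOf g)
    have hdec : g * h = ↑(aOf g * ⟨uOf g * ↑(aOf h) * (uOf g)⁻¹, hc⟩) * (uOf g * uOf h) := by
      conv_lhs => rw [hgdec g, hgdec h]
      push_cast
      group
    have h1 : d (g * h) = φ (aOf g * ⟨uOf g * ↑(aOf h) * (uOf g)⁻¹, hc⟩) :=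
      hwd (g * h) _ (uOf g * uOf h) (mul_mem (huU g) (huU h)) hdec
    have h2 : ∀ v : V, ρ g v = ρ (uOf g) v := by
      intro v
      conv_lhs => rw [hgdec g]
      rw [map_mul, Module.End.mul_apply, hAtriv]
    rw [h1, hadd, hequiv (uOf g) (aOf h) ⟨_, hc⟩ rfl, ← h2]
    exact add_comm _ _
  -- the cocycle is not a coboundary
  have hnotcob : ¬ ∃ x : V, ∀ g : G, ρ g x - x = d g := by
    rintro ⟨x, hx⟩
    have h := hx ↑a0
    rw [hAtriv a0 x, sub_self] at h
    have h2 : d ↑a0 = φ a0 := hwd ↑a0 a0 1 (one_mem U) (mul_one _).symm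
    exact hφa0 (by rw [← h2, ← h])
  -- irreducibility of ρ
  have hirr : IsIrreducibleRep ρ := by
    refine ⟨hVnt, fun S hS => ?_⟩
    let N : Subgroup G :=
      { carrier := {g : G | ∃ a : A, ↑a = g ∧ φ a ∈ S}
        one_mem' := ⟨1, rfl, by rw [hφ1]; exact S.zero_mem⟩
        mul_mem' := by
          rintro x y ⟨a, rfl, ha⟩ ⟨b, rfl, hb⟩
          exact ⟨a * b, rfl, by rw [hadd]; exact S.add_mem ha hb⟩
        inv_mem' := by
          rintro x ⟨a, rfl, ha⟩
          exact ⟨a⁻¹, rfl, by rw [hinv]; exact S.neg_mem ha⟩ }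
    have hNmem : ∀ g : G, g ∈ N ↔ ∃ a : A, ↑a = g ∧ φ a ∈ S := fun g => Iff.rfl
    have hNnorm : N.Normal := by
      constructor
      intro n hn g
      obtain ⟨a, rfl, ha⟩ := (hNmem n).1 hn
      exact (hNmem _).2 ⟨⟨g * ↑a * g⁻¹, hAnorm.conj_mem _ a.2 g⟩, rfl,
        by rw [hequiv g a _ rfl]; exact hS g _ ha⟩
    have hBN : B ≤ N := fun b hb =>
      (hNmem b).2 ⟨⟨b, hBle hb⟩, rfl, by rw [(hker _).2 hb]; exact S.zero_mem⟩
    have hNA : N ≤ A := by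
      rintro g ⟨a, rfl, _⟩
      exact a.2
    rcases hmin N hNnorm hBN hNA with hNB | hNA2
    · refine Or.inl ((Submodule.eq_bot_iff S).2 fun s hs => ?_)
      obtain ⟨a, rfl⟩ := hsurj s
      have : (↑a : G) ∈ B := hNB ▸ (hNmem _).2 ⟨a, rfl, hs⟩
      exact (hker a).2 this
    · refine Or.inr (Submodule.eq_top_iff'.2 fun v => ?_)
      obtain ⟨a, rfl⟩ := hsurj v
      have : (↑a : G) ∈ N := by rw [hNA2]; exact a.2
      obtain ⟨b, hb, hbS⟩ := (hNmem _).1 this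
      rwa [show b = a from Subtype.coe_injective hb] at hbS
  -- irreducibility of the trivial representation
  have htriv : IsIrreducibleRep (trivialBRep (ZMod p) G).ρ := by
    refine ⟨inferInstanceAs (Nontrivial (ZMod p)), fun S _ => ?_⟩
    exact Ideal.eq_bot_or_top S
  -- the non-split extension and block membership
  obtain ⟨E, hE⟩ := nonsplit_ext_of_cocycle ρ d hcoc hnotcob
  have hlink : LinkedRep (BRep.of ρ).ρ (trivialBRep (ZMod p) G).ρ := Or.inl ⟨E, hE⟩
  have hblock : BlockRel (BRep.of ρ) (trivialBRep (ZMod p) G) := ⟨hirr, htriv, hlink⟩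
  -- nontriviality of H¹
  have hd : d ∈ groupCohomology.cocycles₁ (Rep.of ρ) :=
    (groupCohomology.mem_cocycles₁_iff (A := Rep.of ρ) d).2 hcoc
  refine ⟨⟨groupCohomology.H1π _ ⟨d, hd⟩, 0, fun hcontra => ?_⟩,
    hblock, hirr, htriv, Relation.ReflTransGen.single hblock⟩
  have hmem : d ∈ groupCohomology.coboundaries₁ (Rep.of ρ) :=
    (groupCohomology.H1π_eq_zero_iff _).1 hcontra
  obtain ⟨x, hx⟩ := hmem
  exact hnotcob ⟨x, fun g => by rw [← hx, groupCohomology.d₀₁_hom_apply]⟩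
end

section
/- Let G be a finite group and let V and W be irreducible F_p G-modules such that there exists a non-split extension of W by V, i.e. a non-split short exact sequence of F_p G-modules 0 → W → X → V → 0. Then there exists an irreducible F_p G-module A lying in the principal block B_0(F_p G) and a surjective F_p G-module homomorphism from V ⊗ A onto W. -/
open Function TensorProduct

/-! ### Auxiliary machinery -/

section Helpers
variable {k G : Type} [Field k] [Group G]
variable {U : Type} [AddCommGroup U] [Module k U]

/-- Restriction of a representation to an invariant submodule. -/
def subRep (ρ : Representation k G U) (A : Submodule k U)
    (h : ∀ g : G, ∀ x ∈ A, ρ g x ∈ A) : Representation k G A where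
  toFun g := (ρ g).restrict (fun x hx => h g x hx)
  map_one' := by
    ext x
    simp [LinearMap.restrict_apply]
  map_mul' g g' := by
    ext x
    simp [LinearMap.restrict_apply]

@[simp] lemma subRep_coe (ρ : Representation k G U) (A : Submodule k U)
    (h : ∀ g : G, ∀ x ∈ A, ρ g x ∈ A) (g : G) (a : A) :
    (subRep ρ A h g a : U) = ρ g (a : U) := rfl

/-- The quotient representation by an invariant submodule. -/
def quotRep (ρ : Representation k G U) (A : Submodule k U)
    (h : ∀ g : G, ∀ x ∈ A, ρ g x ∈ A) : Representation k G (U ⧸ A) where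
  toFun g := A.mapQ A (ρ g) (fun x hx => h g x hx)
  map_one' := by
    apply Submodule.linearMap_qext
    ext x
    simp [Submodule.mapQ_apply]
  map_mul' g g' := by
    apply Submodule.linearMap_qext
    ext x
    simp [Submodule.mapQ_apply]

@[simp] lemma quotRep_mk (ρ : Representation k G U) (A : Submodule k U)
    (h : ∀ g : G, ∀ x ∈ A, ρ g x ∈ A) (g : G) (x : U) :
    quotRep ρ A h g (A.mkQ x) = A.mkQ (ρ g x) := by
  simp [quotRep, Submodule.mapQ_apply]

/-- The trivial one-dimensional representation over a field is irreducible. -/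
lemma trivial_irred : IsIrreducibleRep ((trivialBRep k G).ρ) := by
  show IsIrreducibleRep (Representation.trivial k G k)
  haveI : IsSimpleModule k k :=
    isSimpleModule_self_iff_isUnit.mpr ⟨inferInstance, fun x hx => isUnit_iff_ne_zero.mpr hx⟩
  exact ⟨inferInstance, fun S _ => eq_bot_or_eq_top S⟩

/-- A nonzero 1-cocycle class with values in an irreducible module puts it in the
principal block. -/
lemma principal_of_cocycle {A : Type} [AddCommGroup A] [Module k A]
    (ρA : Representation k G A) (hirr : IsIrreducibleRep ρA)
    (d : G → A) (hd : ∀ g h : G, d (g * h) = d g + ρA g (d h))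
    (hndb : ¬ ∃ a : A, ∀ g : G, d g = a - ρA g a) :
    InPrincipalBlock (BRep.of ρA) := by
  have hd1 : d 1 = 0 := by
    have h := hd 1 1
    rw [one_mul, map_one] at h
    simpa using h
  let F : G → (A × k →ₗ[k] A × k) := fun g =>
    LinearMap.prod
      ((ρA g).comp (LinearMap.fst k A k) +
        (LinearMap.toSpanSingleton k A (d g)).comp (LinearMap.snd k A k))
      (LinearMap.snd k A k)
  have hF : ∀ (g : G) (x : A × k), F g x = (ρA g x.1 + x.2 • d g, x.2) := fun g x => rfl
  let ρX : Representation k G (A × k) :=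
    { toFun := F
      map_one' := by
        apply LinearMap.ext
        intro x
        rw [hF]
        simp [hd1]
      map_mul' := by
        intro g h
        apply LinearMap.ext
        intro x
        rw [Module.End.mul_apply, hF, hF, hF, hd g h]
        simp only [map_add, map_mul, Module.End.mul_apply, map_smul, smul_add]
        rw [Prod.mk.injEq]
        exact ⟨by abel, rfl⟩ }
  have hρX : ∀ (g : G) (x : A × k), ρX g x = (ρA g x.1 + x.2 • d g, x.2) := hF
  let E : RepExtension ρA ((trivialBRep k G).ρ) :=
    { X := A × k
      ρX := ρX
      i := LinearMap.inl k A k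
      π := LinearMap.snd k A k
      hi := LinearMap.inl_injective
      hπ := fun t => ⟨(0, t), rfl⟩
      hexact := by
        ext x
        simp only [LinearMap.mem_range, LinearMap.mem_ker]
        constructor
        · rintro ⟨w, rfl⟩; rfl
        · intro hx
          have hx2 : x.2 = 0 := hx
          refine ⟨x.1, ?_⟩
          ext
          · rfl
          · exact hx2.symm
      hiEquiv := by
        intro g w
        rw [LinearMap.inl_apply, hρX]
        ext <;> simp
      hπEquiv := fun g x => by
        rw [hρX]
        rfl }
  have hns : ¬ E.Splits := by
    rintro ⟨s, hsEq, hsId⟩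
    apply hndb
    refine ⟨(s (1 : k)).1, fun g => ?_⟩
    have h2 : (s (1 : k)).2 = 1 := DFunLike.congr_fun hsId (1 : k)
    have h1 : s (1 : k) = ρX g (s (1 : k)) := hsEq g (1 : k)
    rw [hρX, h2, one_smul] at h1
    have h3 : (s (1 : k)).1 = ρA g (s (1 : k)).1 + d g := congrArg Prod.fst h1
    exact eq_sub_of_add_eq (by rw [add_comm]; exact h3.symm)
  exact ⟨hirr, trivial_irred,
    Relation.ReflTransGen.single ⟨hirr, trivial_irred, Or.inl ⟨E, hns⟩⟩⟩

/-- Key induction: a module with a non-coboundary cocycle contains an irreducible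
submodule lying in the principal block. -/
lemma exists_principal_embedding {k G : Type} [Field k] [Group G] (n : ℕ) :
    ∀ (U : Type) [AddCommGroup U] [Module k U] [Module.Finite k U],
    Module.finrank k U ≤ n → ∀ (ρU : Representation k G U) (c : G → U),
    (∀ g h : G, c (g * h) = c g + ρU g (c h)) →
    (¬ ∃ u : U, ∀ g : G, c g = u - ρU g u) →
    ∃ M : BRep k G, IsIrreducibleRep M.ρ ∧ InPrincipalBlock M ∧
      ∃ θ : M.V →ₗ[k] U, Function.Injective θ ∧ IsEquivariant M.ρ ρU θ := by
  induction n with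
  | zero =>
    intro U _ _ _ hrank ρU c hc hncb
    exfalso
    haveI : Subsingleton U := by
      have h0 : Module.finrank k U = 0 := Nat.le_zero.mp hrank
      exact Module.finrank_zero_iff.mp h0
    exact hncb ⟨0, fun g => Subsingleton.elim _ _⟩
  | succ n ih =>
    intro U _ _ _ hrank ρU c hc hncb
    classical
    haveI hUnt : Nontrivial U := by
      by_contra h
      rw [not_nontrivial_iff_subsingleton] at h
      exact hncb ⟨0, fun g => Subsingleton.elim _ _⟩
    have htopbot : (⊤ : Submodule k U) ≠ ⊥ := by
      intro h
      obtain ⟨x, hx⟩ := exists_ne (0 : U)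
      exact hx ((Submodule.eq_bot_iff ⊤).mp h x trivial)
    have hex : ∃ m : ℕ, ∃ A : Submodule k U,
        (A ≠ ⊥ ∧ ∀ g : G, ∀ x ∈ A, ρU g x ∈ A) ∧ Module.finrank k A = m :=
      ⟨Module.finrank k (⊤ : Submodule k U), ⊤, ⟨htopbot, fun g x _ => trivial⟩, rfl⟩
    obtain ⟨A, ⟨hAbot, hAinv⟩, hArank⟩ := Nat.find_spec hex
    have hmin : ∀ B : Submodule k U, B ≠ ⊥ → (∀ g : G, ∀ x ∈ B, ρU g x ∈ B) →
        Module.finrank k A ≤ Module.finrank k B := by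
      intro B h1 h2
      rw [hArank]
      by_contra hlt
      exact Nat.find_min hex (lt_of_not_ge hlt) ⟨B, ⟨h1, h2⟩, rfl⟩
    haveI hAnt : Nontrivial A := Submodule.nontrivial_iff_ne_bot.mpr hAbot
    set ρA := subRep ρU A hAinv with hρAdef
    have hAirr : IsIrreducibleRep ρA := by
      refine ⟨hAnt, ?_⟩
      intro T hTinv
      set T' := T.map A.subtype with hT'def
      have hT'le : T' ≤ A := Submodule.map_subtype_le A T
      have hT'inv : ∀ g : G, ∀ x ∈ T', ρU g x ∈ T' := by
        rintro g x ⟨t, ht, rfl⟩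
        exact ⟨ρA g t, hTinv g t ht, rfl⟩
      by_cases hbot : T' = ⊥
      · left
        apply Submodule.map_injective_of_injective A.injective_subtype
        rw [← hT'def, hbot, Submodule.map_bot]
      · right
        have hT'A : T' = A := by
          apply Submodule.eq_of_le_of_finrank_le hT'le
          exact hmin T' hbot hT'inv
        apply Submodule.map_injective_of_injective A.injective_subtype
        rw [← hT'def, hT'A, Submodule.map_top, Submodule.range_subtype]
    by_cases hPB : InPrincipalBlock (BRep.of ρA)
    · exact ⟨BRep.of ρA, hAirr, hPB, A.subtype, A.injective_subtype, fun g a => rfl⟩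
    set ρQ := quotRep ρU A hAinv with hρQdef
    set cb : G → U ⧸ A := fun g => A.mkQ (c g) with hcbdef
    have hcb : ∀ g h : G, cb (g * h) = cb g + ρQ g (cb h) := by
      intro g h
      show A.mkQ (c (g * h)) = A.mkQ (c g) + ρQ g (A.mkQ (c h))
      rw [hc g h, map_add, hρQdef, quotRep_mk]
    by_cases hq : ∃ ub : U ⧸ A, ∀ g : G, cb g = ub - ρQ g ub
    · exfalso
      obtain ⟨ub, hub⟩ := hq
      obtain ⟨u, rfl⟩ := A.mkQ_surjective ub
      have hmem : ∀ g : G, c g - (u - ρU g u) ∈ A := by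
        intro g
        rw [← Submodule.Quotient.mk_eq_zero A, ← Submodule.mkQ_apply]
        rw [map_sub, map_sub]
        have h1 : A.mkQ (ρU g u) = ρQ g (A.mkQ u) := (quotRep_mk ρU A hAinv g u).symm
        rw [h1]
        have h2 : A.mkQ (c g) = A.mkQ u - ρQ g (A.mkQ u) := hub g
        rw [h2]
        abel
      set dA : G → A := fun g => ⟨c g - (u - ρU g u), hmem g⟩ with hdAdef
      have hdco : ∀ g h : G, dA (g * h) = dA g + ρA g (dA h) := by
        intro g h
        apply Subtype.ext
        show c (g * h) - (u - ρU (g * h) u) =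
          (c g - (u - ρU g u)) + ρU g (c h - (u - ρU h u))
        rw [hc g h, map_mul, Module.End.mul_apply]
        simp only [map_sub]
        abel
      have hdnb : ¬ ∃ a : A, ∀ g : G, dA g = a - ρA g a := by
        rintro ⟨a, ha⟩
        apply hncb
        refine ⟨u + (a : U), fun g => ?_⟩
        have h5 : c g - (u - ρU g u) = (a : U) - ρU g (a : U) :=
          congrArg Subtype.val (ha g)
        rw [map_add]
        have : c g = (u - ρU g u) + ((a : U) - ρU g (a : U)) := by
          rw [← h5]; abel
        rw [this]; abel
      exact hPB (principal_of_cocycle ρA hAirr dA hdco hdnb)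
    · have hrankq : Module.finrank k (U ⧸ A) ≤ n := by
        have h1 := Submodule.finrank_quotient_add_finrank A
        have h2 : 0 < Module.finrank k A := Module.finrank_pos
        omega
      obtain ⟨N, hNirr, hNpb, θ', hθ'inj, hθ'eq⟩ := ih (U ⧸ A) hrankq ρQ cb hcb hq
      set R := LinearMap.range θ' with hRdef
      set B' : Submodule k U := R.comap A.mkQ with hB'def
      have hB'inv : ∀ g : G, ∀ x ∈ B', ρU g x ∈ B' := by
        intro g x hx
        obtain ⟨b, hb⟩ := hx
        show A.mkQ (ρU g x) ∈ R
        rw [← quotRep_mk ρU A hAinv, ← hb, ← hθ'eq g b]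
        exact ⟨N.ρ g b, rfl⟩
      have hAle : A ≤ B' := by
        intro a ha
        show A.mkQ a ∈ R
        have h0 : A.mkQ a = 0 := by
          rw [Submodule.mkQ_apply]
          exact (Submodule.Quotient.mk_eq_zero A).mpr ha
        rw [h0]
        exact zero_mem R
      set eN : N.V ≃ₗ[k] R := LinearEquiv.ofInjective θ' hθ'inj with heNdef
      have heN : ∀ b : N.V, (eN b : U ⧸ A) = θ' b := fun b => rfl
      set q : B' →ₗ[k] R := LinearMap.codRestrict R (A.mkQ ∘ₗ B'.subtype) (fun x => x.2)
        with hqdef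
      have hqval : ∀ y : B', (q y : U ⧸ A) = A.mkQ (y : U) := fun y => rfl
      have hkey : ∀ y : B', θ' (eN.symm (q y)) = A.mkQ (y : U) := by
        intro y
        rw [← heN (eN.symm (q y)), eN.apply_symm_apply]
        exact hqval y
      let EX : RepExtension ρA N.ρ :=
        { X := B'
          ρX := subRep ρU B' hB'inv
          i := Submodule.inclusion hAle
          π := (eN.symm : R →ₗ[k] N.V) ∘ₗ q
          hi := Submodule.inclusion_injective hAle
          hπ := by
            intro b
            obtain ⟨x, hx⟩ := A.mkQ_surjective (θ' b)
            have hxB : x ∈ B' := by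
              show A.mkQ x ∈ R
              rw [hx]
              exact ⟨b, rfl⟩
            refine ⟨⟨x, hxB⟩, hθ'inj ?_⟩
            rw [LinearMap.comp_apply, LinearEquiv.coe_coe]
            rw [hkey ⟨x, hxB⟩]
            exact hx
          hexact := by
            ext x
            constructor
            · rintro ⟨a, rfl⟩
              show eN.symm (q (Submodule.inclusion hAle a)) = 0
              apply hθ'inj
              rw [hkey, map_zero]
              show A.mkQ (a : U) = 0
              rw [Submodule.mkQ_apply]
              exact (Submodule.Quotient.mk_eq_zero A).mpr a.2
            · intro hx
              have h0 : A.mkQ (x : U) = 0 := by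
                rw [← hkey x]
                have hx' : eN.symm (q x) = 0 := hx
                rw [hx', map_zero]
              have hmem : (x : U) ∈ A := by
                rw [Submodule.mkQ_apply] at h0
                exact (Submodule.Quotient.mk_eq_zero A).mp h0
              exact ⟨⟨(x : U), hmem⟩, Subtype.ext rfl⟩
          hiEquiv := fun g a => Subtype.ext rfl
          hπEquiv := by
            intro g x
            apply hθ'inj
            rw [LinearMap.comp_apply, LinearMap.comp_apply, LinearEquiv.coe_coe]
            rw [hkey, hθ'eq g (eN.symm (q x)), hkey]
            show A.mkQ (ρU g (x : U)) = ρQ g (A.mkQ (x : U))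
            rw [hρQdef, quotRep_mk] }
      by_cases hsp : EX.Splits
      · obtain ⟨s, hsEq, hsId⟩ := hsp
        refine ⟨N, hNirr, hNpb, B'.subtype ∘ₗ s, ?_, ?_⟩
        · intro b b' h
          have hs : s b = s b' := Subtype.ext h
          have hb := DFunLike.congr_fun hsId b
          have hb' := DFunLike.congr_fun hsId b'
          rw [LinearMap.comp_apply] at hb hb'
          rw [LinearMap.id_apply] at hb hb'
          rw [← hb, ← hb', hs]
        · intro g v
          show ((s (N.ρ g v) : B') : U) = ρU g ((s v : B') : U)
          rw [hsEq g v]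
          rfl
      · exfalso
        apply hPB
        have hstep : BlockRel (BRep.of ρA) N := ⟨hAirr, hNirr, Or.inl ⟨EX, hsp⟩⟩
        exact ⟨hAirr, trivial_irred, Relation.ReflTransGen.head hstep hNpb.2.2⟩

end Helpers

/-- Barnes, Theorem 2.8. Let `V, W` be irreducible `𝔽_p G`-modules admitting
a non-split extension `0 → W → X → V → 0`. Then `W` is a quotient of `V ⊗ A` for some
irreducible `𝔽_p G`-module `A` in the principal block. -/
theorem quotient_of_tensor_with_principalBlock
    (p : ℕ) (hp : p.Prime) (G : Type) [Group G] [Finite G]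
    (V : Type) [AddCommGroup V] [Module (ZMod p) V] [Module.Finite (ZMod p) V]
    (W : Type) [AddCommGroup W] [Module (ZMod p) W] [Module.Finite (ZMod p) W]
    (ρV : Representation (ZMod p) G V) (ρW : Representation (ZMod p) G W)
    (hVirr : IsIrreducibleRep ρV) (hWirr : IsIrreducibleRep ρW)
    (E : RepExtension ρW ρV) (hE : ¬ E.Splits) :
    ∃ M : BRep (ZMod p) G, IsIrreducibleRep M.ρ ∧ InPrincipalBlock M ∧
      ∃ f : V ⊗[ZMod p] M.V →ₗ[ZMod p] W,
        Function.Surjective f ∧ IsEquivariant (ρV.tprod M.ρ) ρW f := by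
  haveI := Fact.mk hp
  classical
  have hVinv1 : ∀ (g : G) (v : V), ρV g (ρV g⁻¹ v) = v := by
    intro g v
    rw [← Module.End.mul_apply, ← map_mul, mul_inv_cancel, map_one, Module.End.one_apply]
  have hVinv2 : ∀ (g : G) (v : V), ρV g⁻¹ (ρV g v) = v := by
    intro g v
    rw [← Module.End.mul_apply, ← map_mul, inv_mul_cancel, map_one, Module.End.one_apply]
  obtain ⟨s, hs⟩ := E.π.exists_rightInverse_of_surjective (LinearMap.range_eq_top.mpr E.hπ)
  have hsv : ∀ x : V, E.π (s x) = x := fun x => DFunLike.congr_fun hs x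
  set ρU := ρV.linHom ρW with hρUdef
  set e : W ≃ₗ[ZMod p] LinearMap.range E.i := LinearEquiv.ofInjective E.i E.hi with hedef
  have hie : ∀ y : LinearMap.range E.i, E.i (e.symm y) = (y : E.X) := fun y =>
    congrArg Subtype.val (e.apply_symm_apply y)
  have hπi : ∀ w : W, E.π (E.i w) = 0 := by
    intro w
    have hmem : E.i w ∈ LinearMap.ker E.π := E.hexact ▸ LinearMap.mem_range_self E.i w
    exact hmem
  set cval : G → (V →ₗ[ZMod p] E.X) :=
    fun g => (E.ρX g ∘ₗ s ∘ₗ (ρV g⁻¹ : V →ₗ[ZMod p] V)) - s with hcvaldef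
  have hmem : ∀ (g : G) (v : V), cval g v ∈ LinearMap.range E.i := by
    intro g v
    rw [E.hexact, LinearMap.mem_ker]
    show E.π (E.ρX g (s (ρV g⁻¹ v)) - s v) = 0
    rw [map_sub, E.hπEquiv, hsv, hsv, hVinv1, sub_self]
  set c : G → (V →ₗ[ZMod p] W) := fun g =>
    (e.symm : LinearMap.range E.i →ₗ[ZMod p] W) ∘ₗ
      LinearMap.codRestrict (LinearMap.range E.i) (cval g) (hmem g) with hcdef
  have hic : ∀ (g : G) (v : V), E.i (c g v) = E.ρX g (s (ρV g⁻¹ v)) - s v := by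
    intro g v
    show E.i (e.symm ⟨cval g v, hmem g v⟩) = E.ρX g (s (ρV g⁻¹ v)) - s v
    rw [hie]
    show (cval g) v = _
    simp only [hcvaldef, LinearMap.sub_apply, LinearMap.comp_apply]
  have hcoc : ∀ g h : G, c (g * h) = c g + ρU g (c h) := by
    intro g h
    apply LinearMap.ext
    intro v
    apply E.hi
    rw [LinearMap.add_apply, map_add, hic (g * h) v]
    have hRterm : (ρU g (c h)) v = ρW g (c h (ρV g⁻¹ v)) := rfl
    rw [hRterm, E.hiEquiv g, hic h, hic g]
    rw [mul_inv_rev, map_mul, map_mul]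
    simp only [Module.End.mul_apply, map_sub]
    abel
  have hncb : ¬ ∃ u0 : V →ₗ[ZMod p] W, ∀ g : G, c g = u0 - ρU g u0 := by
    rintro ⟨u0, hu0⟩
    apply hE
    refine ⟨s + E.i ∘ₗ u0, ?_, ?_⟩
    · intro g v
      show s (ρV g v) + E.i (u0 (ρV g v)) = E.ρX g (s v + E.i (u0 v))
      have h1 : E.i (c g (ρV g v)) = E.ρX g (s v) - s (ρV g v) := by
        rw [hic g (ρV g v), hVinv2]
      have h2 : c g (ρV g v) = u0 (ρV g v) - ρW g (u0 v) := by
        rw [hu0 g]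
        show u0 (ρV g v) - (ρW g ∘ₗ u0 ∘ₗ ρV g⁻¹) (ρV g v) = u0 (ρV g v) - ρW g (u0 v)
        simp only [LinearMap.comp_apply]
        rw [hVinv2]
      rw [h2] at h1
      rw [map_sub, E.hiEquiv g (u0 v)] at h1
      have h3 := sub_eq_sub_iff_add_eq_add.mp h1
      rw [map_add]
      rw [add_comm (s (ρV g v)) (E.i (u0 (ρV g v)))]
      exact h3
    · rw [LinearMap.comp_add, ← LinearMap.comp_assoc]
      have h4 : E.π ∘ₗ E.i = 0 := LinearMap.ext hπi
      rw [hs, h4, LinearMap.zero_comp, add_zero]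
  obtain ⟨M, hMirr, hMpb, θ, hθinj, hθeq⟩ :=
    exists_principal_embedding (Module.finrank (ZMod p) (V →ₗ[ZMod p] W))
      (V →ₗ[ZMod p] W) le_rfl ρU c hcoc hncb
  set f : V ⊗[ZMod p] M.V →ₗ[ZMod p] W := TensorProduct.lift θ.flip with hfdef
  have hftmul : ∀ (v : V) (a : M.V), f (v ⊗ₜ[ZMod p] a) = θ a v := fun v a => rfl
  have hfeq : IsEquivariant (ρV.tprod M.ρ) ρW f := by
    intro g t
    induction t using TensorProduct.induction_on with
    | zero => simp
    | tmul v a =>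
      rw [Representation.tprod_apply, TensorProduct.map_tmul, hftmul, hftmul]
      rw [hθeq g a]
      show (ρW g ∘ₗ θ a ∘ₗ ρV g⁻¹) (ρV g v) = ρW g (θ a v)
      simp only [LinearMap.comp_apply]
      rw [hVinv2]
    | add x y hx hy =>
      rw [map_add, map_add, hx, hy, ← map_add, ← map_add]
  refine ⟨M, hMirr, hMpb, f, ?_, hfeq⟩
  have hrange : ∀ (g : G), ∀ w ∈ LinearMap.range f, ρW g w ∈ LinearMap.range f := by
    rintro g w ⟨t, rfl⟩
    exact ⟨(ρV.tprod M.ρ) g t, hfeq g t⟩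
  rcases hWirr.2 (LinearMap.range f) hrange with hbot | htop
  · exfalso
    haveI := hMirr.1
    obtain ⟨a, ha⟩ := exists_ne (0 : M.V)
    have hθa : θ a ≠ 0 := fun h0 => ha (hθinj (by rw [h0, map_zero]))
    obtain ⟨v, hv⟩ : ∃ v : V, θ a v ≠ 0 := by
      by_contra hno
      push_neg at hno
      exact hθa (LinearMap.ext hno)
    have hm : f (v ⊗ₜ[ZMod p] a) ∈ LinearMap.range f := LinearMap.mem_range_self f _
    rw [hbot, Submodule.mem_bot, hftmul] at hm
    exact hv hm
  · exact LinearMap.range_eq_top.mp htop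
end
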